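/- arXiv:1008.3043 — 6 statements merged into one kernel-verified Lean document; each statement's English description precedes it below -/
import Mathlib

section
/- Let d, k be positive integers with k ≤ d, let ε̄ > 0, and let f : B_{ℝ^d}(1+ε̄) → ℝ satisfy f(x) = g(Ax) = g̃(Ãx) for all x ∈ B_{ℝ^d}(1+ε̄), where A and Ã are k×d real matrices with AA^T = I_k = ÃÃ^T and g, g̃ are continuously differentiable on their domains. If the matrix H^f := ∫_{S^{d−1}} ∇f(x)∇f(x)^T dμ_{S^{d−1}}(x) has rank k, then there exists a k×k orthogonal matrix 𝒪 (𝒪𝒪^T = I_k = 𝒪^T𝒪) such that Ã = 𝒪A. -/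
open MeasureTheory Matrix

/-!
Near the unit sphere `f = g ∘ A`, so every gradient `∇f(x) = Aᵀ ∇g(Ax)` is orthogonal to `ker A`;
hence `ker A ⊆ ker H^f`. Both kernels have dimension `d - k`, so `ker A = ker H^f`, and likewise
`ker Ã = ker H^f`. Two row-orthonormal matrices with the same kernel differ by the orthogonal
factor `𝒪 = Ã Aᵀ`, because `Aᵀ A` is the orthogonal projection onto `(ker A)ᗮ`.
-/

namespace Matrix

variable {m n p : Type*} [Fintype n]

theorem sum_sq_mulVec_le_of_mul_transpose_eq_one [Fintype m] [DecidableEq m]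
    {A : Matrix m n ℝ} (hA : A * Aᵀ = 1) (x : n → ℝ) : ∑ i, (A *ᵥ x) i ^ 2 ≤ ∑ i, x i ^ 2 := by
  -- Pythagoras for `x = y + Aᵀ A x`, where `A y = 0`
  set y := x - Aᵀ *ᵥ (A *ᵥ x)
  have hAy : A *ᵥ y = 0 := by
    simp [y, mulVec_sub, mulVec_mulVec, ← Matrix.mul_assoc, hA]
  have hcross : (Aᵀ *ᵥ (A *ᵥ x)) ⬝ᵥ y = 0 := by
    rw [dotProduct_comm, dotProduct_mulVec, vecMul_transpose, hAy, zero_dotProduct]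
  have hproj : (Aᵀ *ᵥ (A *ᵥ x)) ⬝ᵥ (Aᵀ *ᵥ (A *ᵥ x)) = (A *ᵥ x) ⬝ᵥ (A *ᵥ x) := by
    rw [dotProduct_mulVec, vecMul_transpose, mulVec_mulVec, hA, one_mulVec]
  have hpyth : x ⬝ᵥ x = y ⬝ᵥ y + (A *ᵥ x) ⬝ᵥ (A *ᵥ x) := by
    have hx : x = y + Aᵀ *ᵥ (A *ᵥ x) := by simp [y]
    conv_lhs => rw [hx]
    rw [add_dotProduct, dotProduct_add, dotProduct_add, dotProduct_comm y (Aᵀ *ᵥ _), hcross,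
      hproj, add_zero, zero_add]
  have hy : 0 ≤ y ⬝ᵥ y := by
    simpa [dotProduct] using Finset.sum_nonneg fun i _ => mul_self_nonneg (y i)
  simp only [sq]
  simp only [dotProduct] at hpyth hy
  linarith

theorem rank_eq_card_of_mul_transpose_eq_one [Fintype m] [DecidableEq m] {A : Matrix m n ℝ}
    (hA : A * Aᵀ = 1) :
    A.rank = Fintype.card m := by
  rw [← rank_self_mul_transpose, hA, rank_one]

theorem ker_mulVecLin_eq_of_le_of_rank_eq {K : Type*} [Field K] [Fintype p]
    {B : Matrix m n K} {C : Matrix p n K}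
    (hle : LinearMap.ker B.mulVecLin ≤ LinearMap.ker C.mulVecLin) (hrank : B.rank = C.rank) :
    LinearMap.ker B.mulVecLin = LinearMap.ker C.mulVecLin := by
  refine Submodule.eq_of_le_of_finrank_eq hle ?_
  have hB := LinearMap.finrank_range_add_finrank_ker B.mulVecLin
  have hC := LinearMap.finrank_range_add_finrank_ker C.mulVecLin
  rw [← rank, hrank] at hB
  rw [← rank] at hC
  omega

theorem eq_mul_transpose_mul_of_ker_le [Fintype m] [DecidableEq m] {K : Type*} [Field K]
    {A : Matrix m n K} {B : Matrix p n K}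
    (hA : A * Aᵀ = 1) (hker : LinearMap.ker A.mulVecLin ≤ LinearMap.ker B.mulVecLin) :
    B = B * Aᵀ * A := by
  refine ext_iff_mulVec.mpr fun v => ?_
  have hv : v - (Aᵀ * A) *ᵥ v ∈ LinearMap.ker A.mulVecLin := by
    simp [mulVec_sub, mulVec_mulVec, ← Matrix.mul_assoc, hA]
  have := hker hv
  simp only [LinearMap.mem_ker, mulVecLin_apply, mulVec_sub, sub_eq_zero] at this
  rw [this, mulVec_mulVec, Matrix.mul_assoc]

theorem exists_orthogonal_eq_mul_of_ker_le [Fintype m] [DecidableEq m] {A B : Matrix m n ℝ}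
    (hA : A * Aᵀ = 1) (hB : B * Bᵀ = 1)
    (hker : LinearMap.ker A.mulVecLin ≤ LinearMap.ker B.mulVecLin) :
    ∃ O : Matrix m m ℝ, O * Oᵀ = 1 ∧ Oᵀ * O = 1 ∧ B = O * A := by
  have hBA := eq_mul_transpose_mul_of_ker_le hA hker
  have hO : (B * Aᵀ) * (B * Aᵀ)ᵀ = 1 := by
    rw [transpose_mul, transpose_transpose, ← Matrix.mul_assoc, ← hBA, hB]
  exact ⟨B * Aᵀ, hO, mul_eq_one_comm.mp hO, hBA⟩

end Matrix

theorem fderiv_eq_comp_of_eqOn {𝕜 E F G : Type*} [NontriviallyNormedField 𝕜]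
    [NormedAddCommGroup E] [NormedSpace 𝕜 E] [NormedAddCommGroup F] [NormedSpace 𝕜 F]
    [NormedAddCommGroup G] [NormedSpace 𝕜 G] {f : E → G} {g : F → G} (L : E →L[𝕜] F)
    {U : Set E} (hU : IsOpen U) (hfg : Set.EqOn f (g ∘ L) U) {x : E} (hx : x ∈ U)
    (hg : DifferentiableAt 𝕜 g (L x)) :
    fderiv 𝕜 f x = (fderiv 𝕜 g (L x)).comp L :=
  ((hg.hasFDerivAt.comp x L.hasFDerivAt).congr_of_eventuallyEq
    (hfg.eventuallyEq_of_mem (hU.mem_nhds hx))).fderiv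

theorem integrable_of_continuousOn_of_ae_mem {X E : Type*} [TopologicalSpace X] [T2Space X]
    [MeasurableSpace X] [OpensMeasurableSpace X] [NormedAddCommGroup E] {μ : Measure X}
    [IsFiniteMeasure μ] {K : Set X} {φ : X → E} (hK : IsCompact K) (hφ : ContinuousOn φ K)
    (hμ : ∀ᵐ x ∂μ, x ∈ K) : Integrable φ μ := by
  have h := hφ.integrableOn_compact hK (μ := μ)
  rwa [IntegrableOn, Measure.restrict_eq_self_of_ae_mem hμ] at h

theorem mulVec_eq_zero_of_ae_apply_eq_zero {n α : Type*} [Fintype n] [DecidableEq n]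
    [MeasurableSpace α] {μ : Measure α} {D : α → (n → ℝ) →L[ℝ] ℝ} {H : Matrix n n ℝ}
    (hH : ∀ i j, H i j = ∫ x, D x (Pi.single i 1) * D x (Pi.single j 1) ∂μ)
    (hint : ∀ i j, Integrable (fun x => D x (Pi.single i 1) * D x (Pi.single j 1)) μ)
    {w : n → ℝ} (hw : ∀ᵐ x ∂μ, D x w = 0) : H *ᵥ w = 0 := by
  have hDw : ∀ x, ∑ j, D x (Pi.single j 1) * w j = D x w := fun x => by
    conv_rhs => rw [← Finset.univ_sum_single w]
    refine (map_sum (D x) _ _).symm ▸ Finset.sum_congr rfl fun j _ => ?_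
    rw [mul_comm, ← smul_eq_mul, ← map_smul, ← Pi.single_smul, smul_eq_mul, mul_one]
  funext i
  calc (H *ᵥ w) i = ∑ j, ∫ x, D x (Pi.single i 1) * D x (Pi.single j 1) * w j ∂μ := by
        simp only [mulVec, dotProduct, hH, integral_mul_const]
    _ = ∫ x, D x (Pi.single i 1) * D x w ∂μ := by
        rw [← integral_finsetSum _ fun j _ => (hint i j).mul_const (w j)]
        simp only [mul_assoc, ← Finset.mul_sum, hDw]
    _ = 0 := integral_eq_zero_of_ae (hw.mono fun x hx => by simp [hx])

theorem isCompact_setOf_sum_sq_eq_one (n : Type*) [Fintype n] :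
    IsCompact {x : n → ℝ | ∑ i, x i ^ 2 = 1} := by
  refine Metric.isCompact_of_isClosed_isBounded (isClosed_eq (by fun_prop) continuous_const)
    ((Metric.isBounded_closedBall (x := 0) (r := 1)).subset fun x hx => ?_)
  rw [mem_closedBall_zero_iff, pi_norm_le_iff_of_nonneg zero_le_one]
  intro i
  rw [Real.norm_eq_abs, ← sq_le_one_iff_abs_le_one, ← hx.out]
  exact Finset.single_le_sum (fun j _ => sq_nonneg (x j)) (Finset.mem_univ i)

theorem isOpen_setOf_sum_sq_lt (n : Type*) [Fintype n] (c : ℝ) :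
    IsOpen {x : n → ℝ | ∑ i, x i ^ 2 < c} :=
  isOpen_lt (by fun_prop) continuous_const

section Ridge

variable {m n : Type*} [Fintype m] [Fintype n] [DecidableEq m] {A : Matrix m n ℝ}
  {g : (m → ℝ) → ℝ} {f : (n → ℝ) → ℝ} {r : ℝ}

theorem contDiffOn_of_eq_comp_mulVec (hA : A * Aᵀ = 1)
    (hg : ContDiffOn ℝ 1 g {y | ∑ i, y i ^ 2 ≤ r ^ 2})
    (hfg : ∀ x, ∑ i, x i ^ 2 ≤ r ^ 2 → f x = g (A *ᵥ x)) :
    ContDiffOn ℝ 1 f {x | ∑ i, x i ^ 2 < r ^ 2} := by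
  refine (hg.comp (A.mulVecLin.toContinuousLinearMap.contDiff.contDiffOn) fun x hx => ?_).congr
    fun x (hx : _ < _) => hfg x hx.le
  exact (sum_sq_mulVec_le_of_mul_transpose_eq_one hA x).trans (le_of_lt hx)

theorem fderiv_apply_eq_zero_of_eq_comp_mulVec (hA : A * Aᵀ = 1)
    (hg : ContDiffOn ℝ 1 g {y | ∑ i, y i ^ 2 ≤ r ^ 2})
    (hfg : ∀ x, ∑ i, x i ^ 2 ≤ r ^ 2 → f x = g (A *ᵥ x)) {x : n → ℝ}
    (hx : ∑ i, x i ^ 2 < r ^ 2) {w : n → ℝ} (hw : A *ᵥ w = 0) : fderiv ℝ f x w = 0 := by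
  have hAx : ∑ i, (A *ᵥ x) i ^ 2 < r ^ 2 :=
    (sum_sq_mulVec_le_of_mul_transpose_eq_one hA x).trans_lt hx
  have hgx : DifferentiableAt ℝ g (A *ᵥ x) :=
    (hg.differentiableOn one_ne_zero).differentiableAt <| Filter.mem_of_superset
      ((isOpen_setOf_sum_sq_lt m _).mem_nhds hAx) (Set.ofPred_subset_ofPred.mpr fun _ => le_of_lt)
  rw [fderiv_eq_comp_of_eqOn A.mulVecLin.toContinuousLinearMap (isOpen_setOf_sum_sq_lt n _)
    (fun y (hy : _ < _) => hfg y hy.le) hx hgx]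
  simp [hw]

theorem ker_mulVecLin_le_ker_of_eq_comp_mulVec [DecidableEq n] {μ : Measure (n → ℝ)}
    [IsFiniteMeasure μ] {K : Set (n → ℝ)} (hK : IsCompact K)
    (hKr : K ⊆ {x | ∑ i, x i ^ 2 < r ^ 2}) (hμK : ∀ᵐ x ∂μ, x ∈ K) (hA : A * Aᵀ = 1)
    (hg : ContDiffOn ℝ 1 g {y | ∑ i, y i ^ 2 ≤ r ^ 2})
    (hfg : ∀ x, ∑ i, x i ^ 2 ≤ r ^ 2 → f x = g (A *ᵥ x)) {H : Matrix n n ℝ}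
    (hH : ∀ i j, H i j = ∫ x, fderiv ℝ f x (Pi.single i 1) * fderiv ℝ f x (Pi.single j 1) ∂μ) :
    LinearMap.ker A.mulVecLin ≤ LinearMap.ker H.mulVecLin := by
  intro w hw
  have hf := (contDiffOn_of_eq_comp_mulVec hA hg hfg).continuousOn_fderiv_of_isOpen
    (isOpen_setOf_sum_sq_lt n _) le_rfl
  have hint (i j : n) : Integrable
      (fun x => fderiv ℝ f x (Pi.single i 1) * fderiv ℝ f x (Pi.single j 1)) μ :=
    integrable_of_continuousOn_of_ae_mem hK (((hf.clm_apply continuousOn_const).mul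
      (hf.clm_apply continuousOn_const)).mono hKr) hμK
  exact mulVec_eq_zero_of_ae_apply_eq_zero hH hint
    (hμK.mono fun x hx => fderiv_apply_eq_zero_of_eq_comp_mulVec hA hg hfg (hKr hx) hw)

end Ridge

theorem statement0_general
    (d k : ℕ) (εb : ℝ) (hεb : 0 < εb)
    (f : (Fin d → ℝ) → ℝ)
    (A A' : Matrix (Fin k) (Fin d) ℝ)
    (hA : A * Aᵀ = 1) (hA' : A' * A'ᵀ = 1)
    (g g' : (Fin k → ℝ) → ℝ)
    (hg : ContDiffOn ℝ 1 g {y : Fin k → ℝ | ∑ i, y i ^ 2 ≤ (1 + εb) ^ 2})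
    (hg' : ContDiffOn ℝ 1 g' {y : Fin k → ℝ | ∑ i, y i ^ 2 ≤ (1 + εb) ^ 2})
    (hfg : ∀ x : Fin d → ℝ, ∑ i, x i ^ 2 ≤ (1 + εb) ^ 2 → f x = g (A.mulVec x))
    (hfg' : ∀ x : Fin d → ℝ, ∑ i, x i ^ 2 ≤ (1 + εb) ^ 2 → f x = g' (A'.mulVec x))
    -- `μ` is the uniform (rotation-invariant) probability measure on the unit sphere
    (μ : Measure (Fin d → ℝ)) (hprob : IsProbabilityMeasure μ)
    (hsphere : μ {x : Fin d → ℝ | ∑ i, x i ^ 2 = 1} = 1)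
    -- `H` is the matrix `H^f = ∫ ∇f(x) ∇f(x)ᵀ dμ(x)`
    (H : Matrix (Fin d) (Fin d) ℝ)
    (hH : ∀ i j, H i j =
      ∫ x, fderiv ℝ f x (Pi.single i 1) * fderiv ℝ f x (Pi.single j 1) ∂μ)
    (hrank : H.rank = k) :
    ∃ O : Matrix (Fin k) (Fin k) ℝ, O * Oᵀ = 1 ∧ Oᵀ * O = 1 ∧ A' = O * A := by
  have hS := isCompact_setOf_sum_sq_eq_one (Fin d)
  have hμS : ∀ᵐ x ∂μ, ∑ i, x i ^ 2 = 1 :=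
    (ae_iff_measure_eq hS.isClosed.measurableSet.nullMeasurableSet).mpr (by simp [hsphere])
  have hSr : {x : Fin d → ℝ | ∑ i, x i ^ 2 = 1} ⊆ {x | ∑ i, x i ^ 2 < (1 + εb) ^ 2} :=
    Set.ofPred_subset_ofPred.mpr fun x hx => by nlinarith
  have hkerA := ker_mulVecLin_le_ker_of_eq_comp_mulVec hS hSr hμS hA hg hfg hH
  have hkerA' := ker_mulVecLin_le_ker_of_eq_comp_mulVec hS hSr hμS hA' hg' hfg' hH
  have hrankA := rank_eq_card_of_mul_transpose_eq_one hA
  have hrankA' := rank_eq_card_of_mul_transpose_eq_one hA'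
  rw [Fintype.card_fin] at hrankA hrankA'
  refine exists_orthogonal_eq_mul_of_ker_le hA hA' ?_
  rw [ker_mulVecLin_eq_of_le_of_rank_eq hkerA (hrankA.trans hrank.symm),
    ker_mulVecLin_eq_of_le_of_rank_eq hkerA' (hrankA'.trans hrank.symm)]

/-- If `f = g ∘ A = g' ∘ A'` on the ball of radius `1+εb`, with `A, A'`
row-orthonormal `k × d` matrices and `g, g'` continuously differentiable, and the matrix
`H^f = ∫_{S^{d-1}} ∇f ∇fᵀ dμ` has rank `k` (where `μ` is the rotation-invariant probability
measure on the unit sphere), then `A' = O A` for some `k × k` orthogonal matrix `O`. -/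
theorem statement0
    (d k : ℕ) (hk : 0 < k) (hkd : k ≤ d) (εb : ℝ) (hεb : 0 < εb)
    (f : (Fin d → ℝ) → ℝ)
    (A A' : Matrix (Fin k) (Fin d) ℝ)
    (hA : A * Aᵀ = 1) (hA' : A' * A'ᵀ = 1)
    (g g' : (Fin k → ℝ) → ℝ)
    (hg : ContDiffOn ℝ 1 g {y : Fin k → ℝ | ∑ i, y i ^ 2 ≤ (1 + εb) ^ 2})
    (hg' : ContDiffOn ℝ 1 g' {y : Fin k → ℝ | ∑ i, y i ^ 2 ≤ (1 + εb) ^ 2})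
    (hfg : ∀ x : Fin d → ℝ, ∑ i, x i ^ 2 ≤ (1 + εb) ^ 2 → f x = g (A.mulVec x))
    (hfg' : ∀ x : Fin d → ℝ, ∑ i, x i ^ 2 ≤ (1 + εb) ^ 2 → f x = g' (A'.mulVec x))
    -- `μ` is the uniform (rotation-invariant) probability measure on the unit sphere
    (μ : Measure (Fin d → ℝ)) (hprob : IsProbabilityMeasure μ)
    (hsphere : μ {x : Fin d → ℝ | ∑ i, x i ^ 2 = 1} = 1)
    (hinv : ∀ R : Matrix (Fin d) (Fin d) ℝ, R * Rᵀ = 1 → μ.map R.mulVec = μ)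
    -- `H` is the matrix `H^f = ∫ ∇f(x) ∇f(x)ᵀ dμ(x)`
    (H : Matrix (Fin d) (Fin d) ℝ)
    (hH : ∀ i j, H i j =
      ∫ x, fderiv ℝ f x (Pi.single i 1) * fderiv ℝ f x (Pi.single j 1) ∂μ)
    (hrank : H.rank = k) :
    ∃ O : Matrix (Fin k) (Fin k) ℝ, O * Oᵀ = 1 ∧ Oᵀ * O = 1 ∧ A' = O * A :=
  statement0_general d k εb hεb f A A' hA hA' g g' hg hg' hfg hfg' μ hprob hsphere H hH hrank
end

section
/- Let a ∈ S^{d−1}, let g : [−1,1] → ℝ be continuously differentiable with ‖g'‖_∞ ≤ C₂, and set α := ∫_{S^{d−1}} |g'(a·ξ)|² dμ_{S^{d−1}}(ξ). Assume α > 0. Let ξ₁, …, ξ_{m} be independent random points, each distributed according to μ_{S^{d−1}}. Then for every 0 < s < 1, with probability at least 1 − 2·exp(−2·m·s²·α²/C₂⁴) one has max_{j=1,…,m} |g'(a·ξ_j)| ≥ √(α(1−s)). -/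
open MeasureTheory Matrix

/-!
Let `E` be the event `√(α(1-s)) ≤ |g'(a·ξ)|`. Pointwise `g'(a·ξ)² ≤ α(1-s) + C₂² 𝟙_E(ξ)`, so
integrating gives `α ≤ α(1-s) + C₂² μ(E)`, i.e. `μ(E) ≥ t := sα/C₂²`. The `m` points all miss `E`
with probability `(1 - μ(E))^m ≤ (1-t)^m ≤ exp(-2mt²)`, using `1 - t ≤ exp(-2t²)` on `[0, 1]`.
-/

lemma integral_sq_le_sq_add_mul_measureReal {Ω : Type*} [MeasurableSpace Ω] (μ : Measure Ω)
    [IsProbabilityMeasure μ] {f : Ω → ℝ} (hf : Measurable f) {C : ℝ}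
    (hC : ∀ᵐ x ∂μ, |f x| ≤ C) (β : ℝ) :
    ∫ x, f x ^ 2 ∂μ ≤ β ^ 2 + C ^ 2 * μ.real {x | β ≤ |f x|} := by
  set E := {x | β ≤ |f x|}
  have hE : MeasurableSet E := measurableSet_le measurable_const hf.abs
  have hpointwise : ∀ᵐ x ∂μ, f x ^ 2 ≤ β ^ 2 + E.indicator (fun _ => C ^ 2) x := by
    filter_upwards [hC] with x hx
    by_cases hxE : x ∈ E
    · rw [Set.indicator_of_mem hxE, ← sq_abs]
      nlinarith [abs_nonneg (f x), sq_nonneg β]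
    · rw [Set.indicator_of_notMem hxE, add_zero, ← sq_abs]
      exact pow_le_pow_left₀ (abs_nonneg _) (not_le.1 hxE).le 2
  have hf2 : Integrable (fun x => f x ^ 2) μ := by
    refine .of_bound (hf.pow_const 2).aestronglyMeasurable (C ^ 2) ?_
    filter_upwards [hC] with x hx
    rw [Real.norm_eq_abs, abs_pow]
    exact pow_le_pow_left₀ (abs_nonneg _) hx 2
  calc ∫ x, f x ^ 2 ∂μ ≤ ∫ x, β ^ 2 + E.indicator (fun _ => C ^ 2) x ∂μ :=
        integral_mono_ae hf2 ((integrable_const _).add ((integrable_const _).indicator hE))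
          hpointwise
    _ = β ^ 2 + C ^ 2 * μ.real E := by
        rw [integral_add (integrable_const _) ((integrable_const _).indicator hE),
          integral_const, integral_indicator_const _ hE, probReal_univ, one_smul, smul_eq_mul,
          mul_comm]

lemma measureReal_pi_exists_mem {Ω ι : Type*} [MeasurableSpace Ω] [Fintype ι]
    (μ : Measure Ω) [IsProbabilityMeasure μ] {E : Set Ω} (hE : MeasurableSet E) :
    (Measure.pi fun _ : ι => μ).real {ξ | ∃ j, ξ j ∈ E} = 1 - (1 - μ.real E) ^ Fintype.card ι := by
  have hcompl : {ξ : ι → Ω | ∃ j, ξ j ∈ E} = (Set.univ.pi fun _ => Eᶜ)ᶜ := by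
    ext ξ
    simp
  rw [hcompl, probReal_compl_eq_one_sub (MeasurableSet.univ_pi fun _ => hE.compl),
    measureReal_def, Measure.pi_pi, ENNReal.toReal_prod, Finset.prod_const, Finset.card_univ,
    ← measureReal_def, probReal_compl_eq_one_sub hE]

lemma one_sub_le_exp_neg_two_mul_sq {t : ℝ} (h0 : 0 ≤ t) (h1 : t ≤ 1) :
    1 - t ≤ Real.exp (-(2 * t ^ 2)) := by
  rcases le_or_gt t (1 / 2) with h | h
  · calc 1 - t ≤ 1 - 2 * t ^ 2 := by nlinarith
      _ ≤ Real.exp (-(2 * t ^ 2)) := by linarith [Real.add_one_le_exp (-(2 * t ^ 2))]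
  · -- `exp(-2t²) = exp(-t²/2)⁴`, and the quartic `(1 - t²/2)⁴` still dominates `1 - t` on `[½, 1]`
    have hquarter : 1 - t ^ 2 / 2 ≤ Real.exp (-(t ^ 2 / 2)) := by
      linarith [Real.add_one_le_exp (-(t ^ 2 / 2))]
    calc 1 - t ≤ (1 - t ^ 2 / 2) ^ 4 := by
          nlinarith [sq_nonneg (t - 4/5), sq_nonneg (t^2 - 16/25),
            mul_nonneg (sub_nonneg.2 h.le) (sub_nonneg.2 h1), sq_nonneg ((t-4/5)*(1-t)),
            sq_nonneg ((t-4/5)*t),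
            mul_nonneg (mul_nonneg (sub_nonneg.2 h.le) (sub_nonneg.2 h1)) (sq_nonneg (t-4/5))]
      _ ≤ Real.exp (-(t ^ 2 / 2)) ^ 4 := pow_le_pow_left₀ (by nlinarith) hquarter 4
      _ = Real.exp (-(2 * t ^ 2)) := by rw [← Real.exp_nat_mul]; ring_nf

lemma one_sub_pow_le_exp_neg_two_mul_sq {t q : ℝ} (ht : 0 ≤ t) (htq : t ≤ q) (hq : q ≤ 1) (m : ℕ) :
    (1 - q) ^ m ≤ Real.exp (-(2 * m * t ^ 2)) :=
  calc (1 - q) ^ m ≤ (1 - t) ^ m := pow_le_pow_left₀ (by linarith) (by linarith) m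
    _ ≤ Real.exp (-(2 * t ^ 2)) ^ m :=
        pow_le_pow_left₀ (by linarith) (one_sub_le_exp_neg_two_mul_sq ht (htq.trans hq)) m
    _ = Real.exp (-(2 * m * t ^ 2)) := by rw [← Real.exp_nat_mul]; ring_nf

lemma sum_mul_mem_Icc_of_sum_sq_eq_one {ι : Type*} [Fintype ι] {a x : ι → ℝ}
    (ha : ∑ i, a i ^ 2 = 1) (hx : ∑ i, x i ^ 2 = 1) : ∑ i, a i * x i ∈ Set.Icc (-1 : ℝ) 1 := by
  have hcs := Finset.sum_mul_sq_le_sq_mul_sq Finset.univ a x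
  rw [ha, hx, one_mul, sq_le_one_iff_abs_le_one] at hcs
  exact abs_le.1 hcs

theorem statement2_general
    (d m : ℕ)
    (a : Fin d → ℝ) (ha : ∑ i, a i ^ 2 = 1)
    -- `μ` is the uniform (rotation-invariant) probability measure on the unit sphere
    (μ : Measure (Fin d → ℝ)) (hprob : IsProbabilityMeasure μ)
    (hsphere : μ {x : Fin d → ℝ | ∑ i, x i ^ 2 = 1} = 1)
    (g' : ℝ → ℝ) (C₂ : ℝ)
    (hg'cont : ContinuousOn g' (Set.Icc (-1 : ℝ) 1))
    (hC₂ : ∀ y ∈ Set.Icc (-1 : ℝ) 1, |g' y| ≤ C₂)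
    (α : ℝ) (hα : α = ∫ x, (g' (∑ i, a i * x i)) ^ 2 ∂μ) (hαpos : 0 < α)
    (s : ℝ) (hs0 : 0 < s) (hs1 : s < 1) :
    ENNReal.ofReal (1 - 2 * Real.exp (-(2 * m * s ^ 2 * α ^ 2 / C₂ ^ 4))) ≤
      Measure.pi (fun _ : Fin m => μ)
        {ξ : Fin m → Fin d → ℝ |
          ∃ j : Fin m, Real.sqrt (α * (1 - s)) ≤ |g' (∑ i, a i * ξ j i)|} := by
  set β := Real.sqrt (α * (1 - s))
  set sphere := {x : Fin d → ℝ | ∑ i, x i ^ 2 = 1}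
  -- extending `g'` constantly outside `[-1, 1]` makes `f` continuous, hence measurable
  set f : (Fin d → ℝ) → ℝ := fun x =>
    Set.IccExtend (neg_le_self zero_le_one) ((Set.Icc (-1 : ℝ) 1).domRestrict g') (∑ i, a i * x i)
  have hf : Measurable f := (hg'cont.domRestrict.Icc_extend'.comp (by fun_prop)).measurable
  have hf_eq : ∀ x ∈ sphere, f x = g' (∑ i, a i * x i) := fun x hx =>
    Set.IccExtend_of_mem _ _ (sum_mul_mem_Icc_of_sum_sq_eq_one ha hx)
  have hf_le : ∀ x, |f x| ≤ C₂ := fun x => hC₂ _ (Set.projIcc _ _ _ _).2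
  have hsphere_meas : MeasurableSet sphere := measurableSet_eq_fun (by fun_prop) measurable_const
  have hsphere_null : μ sphereᶜ = 0 := (prob_compl_eq_zero_iff hsphere_meas).2 hsphere
  set E := {x | β ≤ |f x|} ∩ sphere
  have hE : MeasurableSet E := (measurableSet_le measurable_const hf.abs).inter hsphere_meas
  have hq : μ.real E = μ.real {x | β ≤ |f x|} := by
    rw [measureReal_def, measure_inter_conull hsphere_null, measureReal_def]
  have hα_le : α ≤ α * (1 - s) + C₂ ^ 2 * μ.real E := by
    have := integral_sq_le_sq_add_mul_measureReal μ hf (.of_forall hf_le) β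
    rwa [Real.sq_sqrt (by nlinarith), ← integral_congr_ae ?_, ← hα, ← hq] at this
    filter_upwards [mem_ae_iff.2 hsphere_null] with x hx
    rw [hf_eq x hx]
  have hC₂_pos : 0 < C₂ ^ 2 := by
    refine (sq_nonneg C₂).lt_of_ne fun h => ?_
    rw [← h] at hα_le
    nlinarith
  have ht : s * α / C₂ ^ 2 ≤ μ.real E := by
    rw [div_le_iff₀ hC₂_pos]
    linarith
  have hsub : {ξ : Fin m → Fin d → ℝ | ∃ j, ξ j ∈ E} ⊆ {ξ | ∃ j, β ≤ |g' (∑ i, a i * ξ j i)|} :=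
    fun ξ ⟨j, hj⟩ => ⟨j, hf_eq _ hj.2 ▸ hj.1⟩
  refine le_trans ?_ (measure_mono hsub)
  rw [← ofReal_measureReal, measureReal_pi_exists_mem μ hE, Fintype.card_fin]
  refine ENNReal.ofReal_le_ofReal ?_
  have hexp := one_sub_pow_le_exp_neg_two_mul_sq (by positivity) ht measureReal_le_one m
  rw [show 2 * m * (s * α / C₂ ^ 2) ^ 2 = 2 * m * s ^ 2 * α ^ 2 / C₂ ^ 4 by ring] at hexp
  linarith [Real.exp_pos (-(2 * m * s ^ 2 * α ^ 2 / C₂ ^ 4))]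

/-- Let `a` be a unit vector, `g : [-1,1] → ℝ` continuously differentiable
with `|g'| ≤ C₂`, and `α := ∫_{S^{d-1}} |g'(a·ξ)|² dμ(ξ) > 0`.  If `ξ₁, …, ξ_m` are i.i.d.
with law the uniform probability measure `μ` on the sphere, then with probability at least
`1 - 2 exp(-2 m s² α² / C₂⁴)` one has `max_j |g'(a·ξ_j)| ≥ √(α(1-s))`. -/
theorem statement2
    (d m : ℕ) (hd : 0 < d) (hm : 0 < m)
    (a : Fin d → ℝ) (ha : ∑ i, a i ^ 2 = 1)
    -- `μ` is the uniform (rotation-invariant) probability measure on the unit sphere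
    (μ : Measure (Fin d → ℝ)) (hprob : IsProbabilityMeasure μ)
    (hsphere : μ {x : Fin d → ℝ | ∑ i, x i ^ 2 = 1} = 1)
    (hinv : ∀ R : Matrix (Fin d) (Fin d) ℝ, R * Rᵀ = 1 → μ.map R.mulVec = μ)
    (g g' : ℝ → ℝ) (C₂ : ℝ)
    (hg : ∀ y ∈ Set.Icc (-1 : ℝ) 1, HasDerivWithinAt g (g' y) (Set.Icc (-1 : ℝ) 1) y)
    (hg'cont : ContinuousOn g' (Set.Icc (-1 : ℝ) 1))
    (hC₂ : ∀ y ∈ Set.Icc (-1 : ℝ) 1, |g' y| ≤ C₂)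
    (α : ℝ) (hα : α = ∫ x, (g' (∑ i, a i * x i)) ^ 2 ∂μ) (hαpos : 0 < α)
    (s : ℝ) (hs0 : 0 < s) (hs1 : s < 1) :
    ENNReal.ofReal (1 - 2 * Real.exp (-(2 * m * s ^ 2 * α ^ 2 / C₂ ^ 4))) ≤
      Measure.pi (fun _ : Fin m => μ)
        {ξ : Fin m → Fin d → ℝ |
          ∃ j : Fin m, Real.sqrt (α * (1 - s)) ≤ |g' (∑ i, a i * ξ j i)|} :=
  statement2_general d m a ha μ hprob hsphere g' C₂ hg'cont hC₂ α hα hαpos s hs0 hs1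
end

section
/- Let 1 ≤ k < d with d ≥ k + 2, and let μ_k be the probability measure on the unit ball B_{ℝ^k} with Lebesgue density (Γ(d/2)/(π^{k/2} Γ((d−k)/2))) · (1 − ‖y‖₂²)^{(d−2−k)/2}. Then for every 0 < ε < 1, μ_k(B_{ℝ^k}(ε)) ≥ 1 − (2Γ(d/2)/(Γ(k/2)Γ((d−k)/2))) · exp(−((d−2−k)/2)·ε²). -/
/-!
In polar coordinates the mass of the `ε`-ball is `1` minus a constant multiple of the radial tail
`∫_ε^1 r^(k-1) (1 - r²)^α dr` with `α = (d - 2 - k)/2`; the normalisation is a Beta integral after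
the substitution `u = r²`. On `[ε, 1]` the weight `(1 - r²)^α` is at most
`(1 - ε²)^α ≤ exp (-α ε²)`, while `∫_ε^1 r^(k-1) dr ≤ 1/k ≤ 1`.
-/

open MeasureTheory Set Metric Module

lemma continuous_pow_mul_one_sub_sq_rpow (n : ℕ) {α : ℝ} (hα : 0 ≤ α) :
    Continuous fun r : ℝ => r ^ n * (1 - r ^ 2) ^ α :=
  (continuous_pow n).mul ((continuous_const.sub (continuous_pow 2)).rpow_const
    fun _ => Or.inr hα)

lemma integral_rpow_mul_one_sub_rpow {a b : ℝ} (ha : 0 < a) (hb : 0 < b) :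
    ∫ x in (0 : ℝ)..1, x ^ (a - 1) * (1 - x) ^ (b - 1) =
      Real.Gamma a * Real.Gamma b / Real.Gamma (a + b) := by
  rw [eq_div_iff (Real.Gamma_pos_of_pos (add_pos ha hb)).ne']
  apply Complex.ofReal_injective
  push_cast [← Complex.Gamma_ofReal]
  rw [Complex.Gamma_mul_Gamma_eq_betaIntegral (by simpa) (by simpa), mul_comm,
    Complex.betaIntegral, ← intervalIntegral.integral_ofReal]
  congr 1
  refine intervalIntegral.integral_congr fun x hx => ?_
  rw [uIcc_of_le zero_le_one] at hx
  push_cast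
  rw [Complex.ofReal_cpow hx.1, Complex.ofReal_cpow (sub_nonneg.2 hx.2)]
  push_cast; ring

lemma pow_mul_sq_rpow_of_pos {x : ℝ} (hx : 0 < x) {n : ℕ} (hn : 1 ≤ n) :
    x * (x ^ 2) ^ ((n : ℝ) / 2 - 1) = x ^ (n - 1) := by
  rw [← Real.rpow_natCast x 2, ← Real.rpow_mul hx.le, ← Real.rpow_natCast, Nat.cast_sub hn,
    Nat.cast_one,
    show (n : ℝ) - 1 = 1 + ((2 : ℕ) : ℝ) * (n / 2 - 1) by push_cast; ring, Real.rpow_add hx,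
    Real.rpow_one]

lemma integral_Ioc_pow_mul_one_sub_sq_rpow {n : ℕ} (hn : 1 ≤ n) {α : ℝ} (hα : -1 < α) :
    ∫ r in Ioc (0 : ℝ) 1, r ^ (n - 1) * (1 - r ^ 2) ^ α =
      Real.Gamma (n / 2) * Real.Gamma (α + 1) / (2 * Real.Gamma (n / 2 + (α + 1))) := by
  have hsubst := integral_comp_rpow_Ioi_of_pos two_pos
    (g := (Ioc 0 1).indicator fun u => u ^ ((n : ℝ) / 2 - 1) * (1 - u) ^ α)
  have hpt : ∀ x ∈ Ioi (0 : ℝ), ((2 : ℝ) * x ^ ((2 : ℝ) - 1)) •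
      (Ioc 0 1).indicator (fun u => u ^ ((n : ℝ) / 2 - 1) * (1 - u) ^ α) (x ^ (2 : ℝ)) =
      (Ioc 0 1).indicator (fun r => 2 * (r ^ (n - 1) * (1 - r ^ 2) ^ α)) x := by
    intro x (hx : 0 < x)
    have hmem : x ^ 2 ∈ Ioc (0 : ℝ) 1 ↔ x ∈ Ioc (0 : ℝ) 1 := by
      simp [hx, pow_le_one_iff_of_nonneg hx.le two_ne_zero]
    rw [Real.rpow_two, show (2 : ℝ) - 1 = 1 by norm_num, Real.rpow_one, smul_eq_mul]
    by_cases h : x ∈ Ioc (0 : ℝ) 1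
    · rw [indicator_of_mem (hmem.2 h), indicator_of_mem h, ← pow_mul_sq_rpow_of_pos hx hn]
      ring
    · rw [indicator_of_notMem (mt hmem.1 h), indicator_of_notMem h, mul_zero]
  rw [setIntegral_congr_fun measurableSet_Ioi hpt, setIntegral_indicator measurableSet_Ioc,
    setIntegral_indicator measurableSet_Ioc, inter_eq_self_of_subset_right Ioc_subset_Ioi_self,
    integral_const_mul] at hsubst
  have hbeta := integral_rpow_mul_one_sub_rpow (a := n / 2) (b := α + 1) (by positivity)
    (by linarith)
  rw [add_sub_cancel_right, intervalIntegral.integral_of_le zero_le_one, ← hsubst] at hbeta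
  rw [div_mul_eq_div_div_swap, ← hbeta, mul_div_cancel_left₀ _ two_ne_zero]

lemma setIntegral_closedBall_fun_norm {E : Type*} [NormedAddCommGroup E] [NormedSpace ℝ E]
    [Nontrivial E] [FiniteDimensional ℝ E] [MeasurableSpace E] [BorelSpace E]
    (μ : Measure E) [μ.IsAddHaarMeasure] (f : ℝ → ℝ) (ε : ℝ) :
    ∫ x in closedBall 0 ε, f ‖x‖ ∂μ =
      finrank ℝ E * μ.real (ball 0 1) * ∫ r in Ioc 0 ε, r ^ (finrank ℝ E - 1) * f r := by
  have hind : (closedBall (0 : E) ε).indicator (fun x => f ‖x‖) =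
      fun x => (Iic ε).indicator f ‖x‖ := by
    ext x; by_cases h : ‖x‖ ≤ ε <;> simp [h]
  rw [← integral_indicator measurableSet_closedBall, hind, integral_fun_norm_addHaar,
    nsmul_eq_mul, smul_eq_mul, mul_assoc, ← Ioi_inter_Iic, ← setIntegral_indicator measurableSet_Iic]
  congr 3 with r
  by_cases h : r ≤ ε <;> simp [h]

lemma finrank_mul_measureReal_ball_one {E : Type*} [NormedAddCommGroup E]
    [InnerProductSpace ℝ E] [Nontrivial E] [FiniteDimensional ℝ E] [MeasurableSpace E]
    [BorelSpace E] :
    finrank ℝ E * volume.real (ball (0 : E) 1) =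
      2 * Real.pi ^ ((finrank ℝ E : ℝ) / 2) / Real.Gamma (finrank ℝ E / 2) := by
  have hn : (finrank ℝ E : ℝ) ≠ 0 := by simp [finrank_pos.ne']
  rw [measureReal_def, InnerProductSpace.volume_ball, ENNReal.ofReal_one, one_pow, one_mul,
    ENNReal.toReal_ofReal (by positivity), Real.Gamma_add_one (by positivity), Real.sqrt_eq_rpow,
    ← Real.rpow_natCast, ← Real.rpow_mul Real.pi_pos.le]
  field_simp

lemma integral_closedBall_one_sub_norm_sq_rpow {E : Type*} [NormedAddCommGroup E]
    [InnerProductSpace ℝ E] [Nontrivial E] [FiniteDimensional ℝ E] [MeasurableSpace E]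
    [BorelSpace E] {α ε : ℝ} (hα : 0 ≤ α) (hε0 : 0 ≤ ε) (hε1 : ε ≤ 1) :
    ∫ x in closedBall (0 : E) ε, (1 - ‖x‖ ^ 2) ^ α =
      Real.pi ^ ((finrank ℝ E : ℝ) / 2) * Real.Gamma (α + 1) /
          Real.Gamma (finrank ℝ E / 2 + (α + 1)) -
        2 * Real.pi ^ ((finrank ℝ E : ℝ) / 2) / Real.Gamma (finrank ℝ E / 2) *
          ∫ r in Ioc ε 1, r ^ (finrank ℝ E - 1) * (1 - r ^ 2) ^ α := by
  have hn : 1 ≤ finrank ℝ E := finrank_pos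
  have hint : IntegrableOn (fun r : ℝ => r ^ (finrank ℝ E - 1) * (1 - r ^ 2) ^ α) (Ioc 0 1) :=
    (continuous_pow_mul_one_sub_sq_rpow _ hα).integrableOn_Ioc
  have hsplit := setIntegral_union (Ioc_disjoint_Ioc_of_le le_rfl) measurableSet_Ioc
    (hint.mono_set (Ioc_subset_Ioc_right hε1)) (hint.mono_set (Ioc_subset_Ioc_left hε0))
  rw [Ioc_union_Ioc_eq_Ioc hε0 hε1, integral_Ioc_pow_mul_one_sub_sq_rpow hn (by linarith)]
    at hsplit
  have hΓ : Real.Gamma (finrank ℝ E / 2) ≠ 0 := (Real.Gamma_pos_of_pos (by positivity)).ne'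
  rw [setIntegral_closedBall_fun_norm volume (fun r => (1 - r ^ 2) ^ α),
    finrank_mul_measureReal_ball_one, eq_sub_iff_add_eq, ← mul_add, ← hsplit]
  field_simp

lemma integral_Ioc_pow_mul_one_sub_sq_rpow_le (n : ℕ) {α ε : ℝ} (hα : 0 ≤ α) (hε0 : 0 ≤ ε)
    (hε1 : ε ≤ 1) :
    ∫ r in Ioc ε 1, r ^ n * (1 - r ^ 2) ^ α ≤ (1 - ε ^ 2) ^ α / (n + 1) := by
  have hmono : ∀ r ∈ Ioc ε 1, r ^ n * (1 - r ^ 2) ^ α ≤ (1 - ε ^ 2) ^ α * r ^ n := fun r hr => by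
    have hr0 : 0 ≤ r := hε0.trans hr.1.le
    rw [mul_comm]
    gcongr
    · nlinarith [hr.2]
    · exact hr.1.le
  calc ∫ r in Ioc ε 1, r ^ n * (1 - r ^ 2) ^ α
      ≤ ∫ r in Ioc ε 1, (1 - ε ^ 2) ^ α * r ^ n :=
        setIntegral_mono_on (continuous_pow_mul_one_sub_sq_rpow n hα).integrableOn_Ioc
          (by fun_prop : Continuous _).integrableOn_Ioc measurableSet_Ioc hmono
    _ = (1 - ε ^ 2) ^ α * ((1 - ε ^ (n + 1)) / (n + 1)) := by
        rw [integral_const_mul, ← intervalIntegral.integral_of_le hε1, integral_pow, one_pow]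
    _ ≤ (1 - ε ^ 2) ^ α / (n + 1) := by
        rw [mul_div_assoc']
        gcongr
        exact mul_le_of_le_one_right (Real.rpow_nonneg (by nlinarith) _)
          (sub_le_self _ (pow_nonneg hε0 _))

lemma one_sub_rpow_le_exp_neg_mul {x α : ℝ} (hx : x ≤ 1) (hα : 0 ≤ α) :
    (1 - x) ^ α ≤ Real.exp (-α * x) :=
  calc (1 - x) ^ α ≤ Real.exp (-x) ^ α :=
        Real.rpow_le_rpow (sub_nonneg.2 hx) (Real.one_sub_le_exp_neg x) hα
    _ = Real.exp (-α * x) := by rw [← Real.exp_mul]; ring_nf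

lemma setIntegral_sum_sq_le_eq_setIntegral_closedBall {ι : Type*} [Fintype ι] (f : ℝ → ℝ)
    {ε : ℝ} (hε : 0 ≤ ε) :
    ∫ y in {y : ι → ℝ | ∑ i, y i ^ 2 ≤ ε ^ 2}, f (∑ i, y i ^ 2) =
      ∫ x in closedBall (0 : EuclideanSpace ℝ ι) ε, f (‖x‖ ^ 2) := by
  have hball : (WithLp.ofLp ⁻¹' {y : ι → ℝ | ∑ i, y i ^ 2 ≤ ε ^ 2}) =
      closedBall (0 : EuclideanSpace ℝ ι) ε := by
    ext x
    simp [← EuclideanSpace.real_norm_sq_eq, sq_le_sq₀ (norm_nonneg x) hε]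
  rw [← (PiLp.volume_preserving_ofLp ι).setIntegral_preimage_emb
    (MeasurableEquiv.toLp 2 (ι → ℝ)).symm.measurableEmbedding, hball]
  simp_rw [EuclideanSpace.real_norm_sq_eq]

theorem statement4_general
    (d k : ℕ) (hk : 1 ≤ k) (hd : k + 2 ≤ d)
    (ε : ℝ) (hε0 : 0 < ε) (hε1 : ε < 1) :
    1 - 2 * Real.Gamma ((d : ℝ) / 2) /
          (Real.Gamma ((k : ℝ) / 2) * Real.Gamma (((d : ℝ) - k) / 2)) *
        Real.exp (-(((d : ℝ) - 2 - k) / 2) * ε ^ 2) ≤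
      ∫ y in {y : Fin k → ℝ | ∑ i, y i ^ 2 ≤ ε ^ 2},
        Real.Gamma ((d : ℝ) / 2) /
            (Real.pi ^ ((k : ℝ) / 2) * Real.Gamma (((d : ℝ) - k) / 2)) *
          (1 - ∑ i, y i ^ 2) ^ (((d : ℝ) - 2 - k) / 2) := by
  have : Nonempty (Fin k) := ⟨⟨0, hk⟩⟩
  have hk' : (0 : ℝ) < k := by exact_mod_cast hk
  have hd' : (k : ℝ) + 2 ≤ d := by exact_mod_cast hd
  have hα : 0 ≤ ((d : ℝ) - 2 - k) / 2 := by linarith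
  set α := ((d : ℝ) - 2 - k) / 2
  have htail := ((integral_Ioc_pow_mul_one_sub_sq_rpow_le (k - 1) hα hε0.le hε1.le).trans
    (div_le_self (Real.rpow_nonneg (by nlinarith) _) (by simp))).trans
    (one_sub_rpow_le_exp_neg_mul (by nlinarith) hα)
  rw [setIntegral_sum_sq_le_eq_setIntegral_closedBall
    (fun t => Real.Gamma ((d : ℝ) / 2) /
      (Real.pi ^ ((k : ℝ) / 2) * Real.Gamma (((d : ℝ) - k) / 2)) * (1 - t) ^ α) hε0.le,
    integral_const_mul, integral_closedBall_one_sub_norm_sq_rpow hα hε0.le hε1.le,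
    finrank_euclideanSpace_fin, show α + 1 = ((d : ℝ) - k) / 2 by ring,
    show (k : ℝ) / 2 + ((d : ℝ) - k) / 2 = d / 2 by ring]
  have hΓd : 0 < Real.Gamma ((d : ℝ) / 2) := Real.Gamma_pos_of_pos (by linarith)
  have hΓk : 0 < Real.Gamma ((k : ℝ) / 2) := Real.Gamma_pos_of_pos (by positivity)
  have hΓdk : 0 < Real.Gamma (((d : ℝ) - k) / 2) := Real.Gamma_pos_of_pos (by linarith)
  calc _ ≤ 1 - 2 * Real.Gamma ((d : ℝ) / 2) /
          (Real.Gamma ((k : ℝ) / 2) * Real.Gamma (((d : ℝ) - k) / 2)) *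
        ∫ r in Ioc ε 1, r ^ (k - 1) * (1 - r ^ 2) ^ α := by gcongr
    _ = _ := by field_simp

/-- For `1 ≤ k < d`, `d ≥ k + 2`, and `0 < ε < 1`, the measure `μ_k` with
Lebesgue density `Γ(d/2)/(π^{k/2}Γ((d-k)/2)) (1-‖y‖²)^{(d-2-k)/2}` on the unit ball satisfies
`μ_k(B_{ℝ^k}(ε)) ≥ 1 - (2Γ(d/2)/(Γ(k/2)Γ((d-k)/2))) exp(-((d-2-k)/2) ε²)`. -/
theorem statement4
    (d k : ℕ) (hk : 1 ≤ k) (hkd : k < d) (hd : k + 2 ≤ d)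
    (ε : ℝ) (hε0 : 0 < ε) (hε1 : ε < 1) :
    1 - 2 * Real.Gamma ((d : ℝ) / 2) /
          (Real.Gamma ((k : ℝ) / 2) * Real.Gamma (((d : ℝ) - k) / 2)) *
        Real.exp (-(((d : ℝ) - 2 - k) / 2) * ε ^ 2) ≤
      ∫ y in {y : Fin k → ℝ | ∑ i, y i ^ 2 ≤ ε ^ 2},
        Real.Gamma ((d : ℝ) / 2) /
            (Real.pi ^ ((k : ℝ) / 2) * Real.Gamma (((d : ℝ) - k) / 2)) *
          (1 - ∑ i, y i ^ 2) ^ (((d : ℝ) - 2 - k) / 2) :=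
  statement4_general d k hk hd ε hε0 hε1
end

section
/- Fix M ∈ ℕ and let g : [−1,1] → ℝ be continuously differentiable with ‖g'‖_∞ < ∞, such that g is (M+2)-times continuously differentiable in an open neighborhood 𝒰 of 0 and g^{(ℓ)}(0) = 0 for all ℓ = 1, …, M. Define α(d) := (Γ(d/2)/(π^{1/2} Γ((d−1)/2))) · ∫_{−1}^{1} |g'(y)|² (1 − y²)^{(d−3)/2} dy. Then α(d) = O(d^{−M}) as d → ∞; i.e., there exist C > 0 and d₀ such that α(d) ≤ C·d^{−M} for all d ≥ d₀. -/
/-!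
Near `0` the vanishing derivatives and Taylor's theorem give `|g' y| ≤ A |y|^M`, while
`(1 - y²)^p ≤ exp (-p y²)` with `p = (d - 3) / 2`; the Gaussian moment bound
`y^(2M) exp (-p y²) ≤ M! (2/p)^M exp (-(p/2) y²)` makes this part of the integral
`O(d^(-M-1/2))`. Away from `0` the weight is at most `(1 - δ²)^p`, exponentially small in `d`.
Log-convexity of `Γ` bounds the normalising constant by `√d`.
-/

open Real Set Filter Topology Asymptotics MeasureTheory
open scoped Nat

theorem isBigO_sub_pow_of_iteratedDeriv_eq_zero {f : ℝ → ℝ} {U : Set ℝ} {x₀ : ℝ} {n : ℕ}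
    (hU : IsOpen U) (hx₀ : x₀ ∈ U) (hf : ContDiffOn ℝ n f U)
    (hvanish : ∀ k < n, iteratedDeriv k f x₀ = 0) :
    f =O[𝓝 x₀] fun x ↦ (x - x₀) ^ n := by
  obtain ⟨ε, hε, hball⟩ := Metric.isOpen_iff.1 hU x₀ hx₀
  have htaylor := taylor_isLittleO (convex_ball x₀ ε) (Metric.mem_ball_self hε) (hf.mono hball)
  rw [nhdsWithin_eq_nhds.2 (Metric.ball_mem_nhds x₀ hε)] at htaylor
  have hpoly : taylorWithinEval f n (Metric.ball x₀ ε) x₀ =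
      fun x ↦ ((n ! : ℝ)⁻¹ * iteratedDeriv n f x₀) * (x - x₀) ^ n := by
    ext x
    have hball_eq k := iteratedDerivWithin_of_isOpen (f := f) (n := k)
      (Metric.isOpen_ball (x := x₀)) (Metric.mem_ball_self hε)
    rw [taylor_within_apply, Finset.sum_range_succ, Finset.sum_eq_zero fun k hk ↦ by
      rw [hball_eq, hvanish k (Finset.mem_range.1 hk), smul_zero], hball_eq, smul_eq_mul]
    ring
  simpa [hpoly] using htaylor.isBigO.add
    (isBigO_const_mul_self ((n ! : ℝ)⁻¹ * iteratedDeriv n f x₀) (fun x ↦ (x - x₀) ^ n) _)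

theorem deriv_isBigO_sub_pow_of_iteratedDeriv_eq_zero {f : ℝ → ℝ} {U : Set ℝ} {x₀ : ℝ} {n : ℕ}
    (hU : IsOpen U) (hx₀ : x₀ ∈ U) (hf : ContDiffOn ℝ (n + 1) f U)
    (hvanish : ∀ ℓ : ℕ, 1 ≤ ℓ → ℓ ≤ n → iteratedDeriv ℓ f x₀ = 0) :
    deriv f =O[𝓝 x₀] fun x ↦ (x - x₀) ^ n :=
  isBigO_sub_pow_of_iteratedDeriv_eq_zero hU hx₀ (hf.deriv_of_isOpen hU le_rfl) fun k hk ↦ by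
    rw [← iteratedDeriv_succ']
    exact hvanish (k + 1) (by omega) hk

theorem Asymptotics.IsBigO.exists_forall_abs_lt_abs_le_mul_pow {f : ℝ → ℝ} {n : ℕ} {η : ℝ}
    (hη : 0 < η) (h : f =O[𝓝 0] fun x ↦ x ^ n) :
    ∃ A, ∃ δ ∈ Ioo 0 η, ∀ y, |y| < δ → |f y| ≤ A * |y| ^ n := by
  obtain ⟨A, hA⟩ := h.bound
  obtain ⟨ε, hε, hε'⟩ := Metric.eventually_nhds_iff.1 hA
  refine ⟨A, min ε (η / 2), ⟨lt_min hε (by linarith), (min_le_right _ _).trans_lt (by linarith)⟩,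
    fun y hy ↦ ?_⟩
  simpa using hε' (by rw [Real.dist_eq, sub_zero]; exact hy.trans_le (min_le_left _ _))

theorem Real.Gamma_add_half_le {x : ℝ} (hx : 0 < x) : Gamma (x + 1 / 2) ≤ √x * Gamma x := by
  have h := Gamma_mul_add_mul_le_rpow_Gamma_mul_rpow_Gamma hx (by linarith : 0 < x + 1)
    one_half_pos one_half_pos (by norm_num)
  have hΓ := Gamma_pos_of_pos hx
  rw [show 1 / 2 * x + 1 / 2 * (x + 1) = x + 1 / 2 by ring, Gamma_add_one hx.ne',
    mul_rpow hx.le hΓ.le] at h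
  calc Gamma (x + 1 / 2)
      ≤ x ^ (1 / 2 : ℝ) * (Gamma x ^ (1 / 2 : ℝ) * Gamma x ^ (1 / 2 : ℝ)) := by linarith
    _ = √x * Gamma x := by rw [← rpow_add hΓ, sqrt_eq_rpow]; norm_num

theorem Real.Gamma_half_div_sqrt_pi_mul_Gamma_le_sqrt {d : ℝ} (hd : 1 < d) :
    Gamma (d / 2) / (π ^ (1 / 2 : ℝ) * Gamma ((d - 1) / 2)) ≤ √d := by
  set x := (d - 1) / 2
  have hx : 0 < x := by simp only [x]; linarith
  have hΓ := Gamma_pos_of_pos hx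
  have hπ : 1 ≤ π ^ (1 / 2 : ℝ) := one_le_rpow (by linarith [pi_gt_three]) (by norm_num)
  rw [div_le_iff₀ (by positivity)]
  calc Gamma (d / 2) = Gamma (x + 1 / 2) := by congr 1; simp only [x]; ring
    _ ≤ √x * Gamma x := Gamma_add_half_le hx
    _ ≤ √d * (π ^ (1 / 2 : ℝ) * Gamma x) := by
        gcongr
        · simp only [x]; linarith
        · exact le_mul_of_one_le_left hΓ.le hπ

theorem pow_mul_exp_neg_le (M : ℕ) {t : ℝ} (ht : 0 ≤ t) :
    t ^ M * exp (-t) ≤ M ! * 2 ^ M * exp (-t / 2) := by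
  have h := Real.pow_div_factorial_le_exp (x := t / 2) (by positivity) M
  have h' : (t / 2) ^ M * exp (-(t / 2)) ≤ M ! := by
    rw [exp_neg, ← div_eq_mul_inv, div_le_iff₀ (exp_pos _), mul_comm]
    rwa [div_le_iff₀ (by positivity)] at h
  calc t ^ M * exp (-t) = 2 ^ M * ((t / 2) ^ M * exp (-(t / 2))) * exp (-t / 2) := by
        rw [div_pow, mul_assoc, mul_assoc, ← exp_add]; field_simp; ring_nf
    _ ≤ 2 ^ M * M ! * exp (-t / 2) := by gcongr
    _ = M ! * 2 ^ M * exp (-t / 2) := by ring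

theorem integral_pow_mul_exp_neg_mul_sq_le (M : ℕ) {p : ℝ} (hp : 0 < p) :
    ∫ y in (-1 : ℝ)..1, y ^ (2 * M) * exp (-(p * y ^ 2)) ≤ M ! * (2 / p) ^ M * √(2 * π / p) := by
  have hpoint (y : ℝ) : y ^ (2 * M) * exp (-(p * y ^ 2)) ≤
      M ! * (2 / p) ^ M * exp (-(p / 2) * y ^ 2) := by
    have h := pow_mul_exp_neg_le M (mul_nonneg hp.le (sq_nonneg y))
    rw [mul_pow, ← pow_mul, mul_assoc, show -(p * y ^ 2) / 2 = -(p / 2) * y ^ 2 by ring,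
      ← le_div_iff₀' (by positivity)] at h
    exact h.trans_eq (by rw [div_pow]; field_simp)
  have hgauss : ∫ y in (-1 : ℝ)..1, exp (-(p / 2) * y ^ 2) ≤ √(2 * π / p) := by
    rw [intervalIntegral.integral_of_le (by norm_num),
      show 2 * π / p = π / (p / 2) by field_simp, ← integral_gaussian]
    exact setIntegral_le_integral (integrable_exp_neg_mul_sq (by positivity))
      (Eventually.of_forall fun _ ↦ (exp_pos _).le)
  calc ∫ y in (-1 : ℝ)..1, y ^ (2 * M) * exp (-(p * y ^ 2))
      ≤ ∫ y in (-1 : ℝ)..1, M ! * (2 / p) ^ M * exp (-(p / 2) * y ^ 2) :=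
        intervalIntegral.integral_mono_on (by norm_num)
          (Continuous.intervalIntegrable (by fun_prop) _ _)
          (Continuous.intervalIntegrable (by fun_prop) _ _) fun y _ ↦ hpoint y
    _ ≤ M ! * (2 / p) ^ M * √(2 * π / p) := by
        rw [intervalIntegral.integral_const_mul]; gcongr

theorem sq_mul_one_sub_sq_rpow_le {a A B δ p y : ℝ} {M : ℕ} (hδ₀ : 0 ≤ δ) (hδ₁ : δ ≤ 1)
    (hp : 0 ≤ p) (hy : y ∈ Icc (-1 : ℝ) 1) (hnear : |y| < δ → |a| ≤ A * |y| ^ M) (hfar : |a| ≤ B) :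
    a ^ 2 * (1 - y ^ 2) ^ p ≤
      A ^ 2 * (y ^ (2 * M) * exp (-(p * y ^ 2))) + B ^ 2 * (1 - δ ^ 2) ^ p := by
  have hy2 : 0 ≤ 1 - y ^ 2 := by nlinarith [hy.1, hy.2]
  have hδ2 : 0 ≤ 1 - δ ^ 2 := by nlinarith
  have hnear_nonneg : 0 ≤ A ^ 2 * (y ^ (2 * M) * exp (-(p * y ^ 2))) := by
    rw [pow_mul]; positivity
  have hfar_nonneg : 0 ≤ B ^ 2 * (1 - δ ^ 2) ^ p := by positivity
  rcases lt_or_ge |y| δ with hyδ | hδy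
  · have ha : a ^ 2 ≤ A ^ 2 * y ^ (2 * M) :=
      calc a ^ 2 = |a| ^ 2 := (sq_abs a).symm
        _ ≤ (A * |y| ^ M) ^ 2 := by gcongr; exact hnear hyδ
        _ = A ^ 2 * y ^ (2 * M) := by
          rw [mul_pow, ← pow_mul, mul_comm M, pow_mul, sq_abs, ← pow_mul]
    have hexp : (1 - y ^ 2) ^ p ≤ exp (-(p * y ^ 2)) :=
      calc (1 - y ^ 2) ^ p ≤ exp (-y ^ 2) ^ p := by
            gcongr; linarith [add_one_le_exp (-y ^ 2)]
        _ = exp (-(p * y ^ 2)) := by rw [← exp_mul]; ring_nf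
    calc a ^ 2 * (1 - y ^ 2) ^ p ≤ A ^ 2 * y ^ (2 * M) * exp (-(p * y ^ 2)) := by
          gcongr
          exact ha.trans' (sq_nonneg a)
      _ ≤ _ := by rw [mul_assoc]; linarith
  · have hyδ2 : δ ^ 2 ≤ y ^ 2 := by rw [← sq_abs y]; gcongr
    have ha : a ^ 2 ≤ B ^ 2 := by rw [← sq_abs a]; gcongr
    calc a ^ 2 * (1 - y ^ 2) ^ p ≤ B ^ 2 * (1 - δ ^ 2) ^ p :=
          mul_le_mul ha (rpow_le_rpow hy2 (by linarith) hp) (by positivity) (sq_nonneg B)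
      _ ≤ _ := by linarith

theorem integral_sq_mul_one_sub_sq_rpow_le {f : ℝ → ℝ} {A B δ p : ℝ} {M : ℕ}
    (hf : ContinuousOn f (Icc (-1) 1)) (hδ₀ : 0 ≤ δ) (hδ₁ : δ ≤ 1) (hp : 0 < p)
    (hnear : ∀ y, |y| < δ → |f y| ≤ A * |y| ^ M) (hfar : ∀ y ∈ Icc (-1 : ℝ) 1, |f y| ≤ B) :
    ∫ y in (-1 : ℝ)..1, f y ^ 2 * (1 - y ^ 2) ^ p ≤
      A ^ 2 * (M ! * (2 / p) ^ M * √(2 * π / p)) + 2 * (B ^ 2 * (1 - δ ^ 2) ^ p) := by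
  have hIcc : uIcc (-1 : ℝ) 1 = Icc (-1) 1 := uIcc_of_le (by norm_num)
  have hint : IntervalIntegrable (fun y ↦ f y ^ 2 * (1 - y ^ 2) ^ p) volume (-1) 1 :=
    ContinuousOn.intervalIntegrable <| hIcc ▸ (hf.pow 2).mul
      ((continuous_const.sub (continuous_pow 2)).continuousOn.rpow_const fun _ _ ↦ Or.inr hp.le)
  have hint' : IntervalIntegrable (fun y ↦ A ^ 2 * (y ^ (2 * M) * exp (-(p * y ^ 2))))
      volume (-1) 1 := Continuous.intervalIntegrable (by fun_prop) _ _
  calc ∫ y in (-1 : ℝ)..1, f y ^ 2 * (1 - y ^ 2) ^ p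
      ≤ ∫ y in (-1 : ℝ)..1, (A ^ 2 * (y ^ (2 * M) * exp (-(p * y ^ 2))) +
          B ^ 2 * (1 - δ ^ 2) ^ p) :=
        intervalIntegral.integral_mono_on (by norm_num) hint (hint'.add intervalIntegrable_const)
          fun y hy ↦ sq_mul_one_sub_sq_rpow_le hδ₀ hδ₁ hp.le hy (hnear y) (hfar y hy)
    _ ≤ A ^ 2 * (M ! * (2 / p) ^ M * √(2 * π / p)) + 2 * (B ^ 2 * (1 - δ ^ 2) ^ p) := by
        rw [intervalIntegral.integral_add hint' intervalIntegrable_const,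
          intervalIntegral.integral_const_mul, intervalIntegral.integral_const]
        norm_num
        gcongr
        exact integral_pow_mul_exp_neg_mul_sq_le M hp

theorem sqrt_mul_pow_mul_sqrt_le (M : ℕ) {d p : ℝ} (hd : 0 < d) (hp : d / 4 ≤ p) :
    √d * ((2 / p) ^ M * √(2 * π / p)) ≤ 8 ^ M * √(8 * π) * (d ^ M)⁻¹ := by
  have hp₀ : 0 < p := by linarith
  have h2p : 2 / p ≤ 8 / d := by rw [div_le_div_iff₀ hp₀ hd]; linarith
  have h2πp : 2 * π / p ≤ 8 * π / d := by
    rw [div_le_div_iff₀ hp₀ hd]; nlinarith [pi_pos]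
  calc √d * ((2 / p) ^ M * √(2 * π / p)) ≤ √d * ((8 / d) ^ M * √(8 * π / d)) := by gcongr
    _ = 8 ^ M * √(8 * π) * (d ^ M)⁻¹ := by
        rw [sqrt_div' _ hd.le, div_pow]
        field_simp

theorem eventually_sqrt_mul_rpow_le_inv_pow (M : ℕ) {q : ℝ} (hq₀ : 0 < q) (hq₁ : q < 1) :
    ∀ᶠ d : ℕ in atTop, ∀ p, (d : ℝ) / 4 ≤ p → √d * q ^ p ≤ ((d : ℝ) ^ M)⁻¹ := by
  set r := q ^ (1 / 4 : ℝ)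
  have hr₀ : 0 < r := rpow_pos_of_pos hq₀ _
  have hr₁ : r < 1 := rpow_lt_one hq₀.le hq₁ (by norm_num)
  have hdecay := (tendsto_pow_const_mul_const_pow_of_lt_one (M + 1) hr₀.le hr₁).eventually
    (gt_mem_nhds one_pos)
  filter_upwards [hdecay, eventually_gt_atTop 0] with d hd hd₀ p hp
  have hdR : (1 : ℝ) ≤ d := by exact_mod_cast hd₀
  have hqr : q ^ ((d : ℝ) / 4) = r ^ d := by
    rw [← rpow_natCast, ← rpow_mul hq₀.le]; ring_nf
  rw [← one_div, le_div_iff₀' (by positivity)]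
  calc (d : ℝ) ^ M * (√d * q ^ p) ≤ (d : ℝ) ^ M * (d * r ^ d) := by
        rw [← hqr]
        gcongr ?_ * (?_ * ?_)
        · exact sqrt_le_iff.2 ⟨by linarith, by nlinarith⟩
        · exact rpow_le_rpow_of_exponent_ge hq₀ hq₁.le hp
    _ = (d : ℝ) ^ (M + 1) * r ^ d := by ring
    _ ≤ 1 := hd.le

/-- If `g : [-1,1] → ℝ` is continuously differentiable with bounded
derivative, is `(M+2)`-times continuously differentiable on an open neighborhood `U` of `0`,
and `g^{(ℓ)}(0) = 0` for `ℓ = 1, …, M`, then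
`α(d) := (Γ(d/2)/(√π Γ((d-1)/2))) ∫_{-1}^1 |g'(y)|² (1-y²)^{(d-3)/2} dy = O(d^{-M})`. -/
theorem statement6
    (M : ℕ) (g g' : ℝ → ℝ) (C₂ : ℝ)
    (hg : ∀ y ∈ Set.Icc (-1 : ℝ) 1, HasDerivWithinAt g (g' y) (Set.Icc (-1 : ℝ) 1) y)
    (hg'cont : ContinuousOn g' (Set.Icc (-1 : ℝ) 1))
    (hC₂ : ∀ y ∈ Set.Icc (-1 : ℝ) 1, |g' y| ≤ C₂)
    (U : Set ℝ) (hU : IsOpen U) (h0U : (0 : ℝ) ∈ U)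
    (hsmooth : ContDiffOn ℝ (M + 2) g U)
    (hvanish : ∀ ℓ : ℕ, 1 ≤ ℓ → ℓ ≤ M → iteratedDeriv ℓ g 0 = 0) :
    ∃ C > (0 : ℝ), ∃ d₀ : ℕ, ∀ d : ℕ, d₀ ≤ d →
      Real.Gamma ((d : ℝ) / 2) / (Real.pi ^ ((1 : ℝ) / 2) * Real.Gamma (((d : ℝ) - 1) / 2)) *
          ∫ y in (-1 : ℝ)..1, (g' y) ^ 2 * (1 - y ^ 2) ^ (((d : ℝ) - 3) / 2) ≤
        C * (d : ℝ) ^ (-(M : ℝ)) := by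
  have hderiv : deriv g =ᶠ[𝓝 0] g' :=
    eventually_of_mem (Ioo_mem_nhds (by norm_num : (-1 : ℝ) < 0) one_pos) fun y hy ↦
      ((hg y (Ioo_subset_Icc_self hy)).hasDerivAt (Icc_mem_nhds hy.1 hy.2)).deriv
  have hbigO : g' =O[𝓝 0] fun x ↦ x ^ M := by
    simpa using (deriv_isBigO_sub_pow_of_iteratedDeriv_eq_zero hU h0U
      (hsmooth.of_le (by norm_cast; omega)) hvanish).congr' hderiv EventuallyEq.rfl
  obtain ⟨A, δ, ⟨hδ₀, hδ₁⟩, hnear⟩ := hbigO.exists_forall_abs_lt_abs_le_mul_pow one_pos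
  have hq₀ : 0 < 1 - δ ^ 2 := by nlinarith
  have hq₁ : 1 - δ ^ 2 < 1 := by nlinarith
  obtain ⟨d₀, htail⟩ := eventually_atTop.1
    ((eventually_sqrt_mul_rpow_le_inv_pow M hq₀ hq₁).and (eventually_ge_atTop 6))
  refine ⟨A ^ 2 * M ! * 8 ^ M * √(8 * π) + 2 * C₂ ^ 2 + 1, by positivity, d₀, fun d hd ↦ ?_⟩
  obtain ⟨htail_d, hd₆⟩ := htail d hd
  have hd : (6 : ℝ) ≤ d := by exact_mod_cast hd₆
  set p := ((d : ℝ) - 3) / 2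
  have hp : (d : ℝ) / 4 ≤ p := by simp only [p]; linarith
  have hI₀ : 0 ≤ ∫ y in (-1 : ℝ)..1, g' y ^ 2 * (1 - y ^ 2) ^ p :=
    intervalIntegral.integral_nonneg (by norm_num) fun y hy ↦
      mul_nonneg (sq_nonneg _) (rpow_nonneg (by nlinarith [hy.1, hy.2]) _)
  rw [rpow_neg (Nat.cast_nonneg d), rpow_natCast]
  calc _ ≤ √d * (A ^ 2 * (M ! * (2 / p) ^ M * √(2 * π / p)) + 2 * (C₂ ^ 2 * (1 - δ ^ 2) ^ p)) :=
        mul_le_mul (Gamma_half_div_sqrt_pi_mul_Gamma_le_sqrt (by linarith))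
          (integral_sq_mul_one_sub_sq_rpow_le hg'cont hδ₀.le hδ₁.le (by linarith) hnear hC₂) hI₀
          (sqrt_nonneg _)
    _ = A ^ 2 * M ! * (√d * ((2 / p) ^ M * √(2 * π / p))) +
          2 * C₂ ^ 2 * (√d * (1 - δ ^ 2) ^ p) := by ring
    _ ≤ A ^ 2 * M ! * (8 ^ M * √(8 * π) * ((d : ℝ) ^ M)⁻¹) + 2 * C₂ ^ 2 * ((d : ℝ) ^ M)⁻¹ := by
        gcongr A ^ 2 * M ! * ?_ + 2 * C₂ ^ 2 * ?_
        · exact sqrt_mul_pow_mul_sqrt_le M (by linarith) hp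
        · exact htail_d p hp
    _ ≤ _ := by linarith [show 0 ≤ ((d : ℝ) ^ M)⁻¹ by positivity]
end

section
/- Let B and B̂ be n×m real matrices admitting decompositions B = U₁Σ₁V₁^T + U₂Σ₂V₂^T and B̂ = Û₁Σ̂₁V̂₁^T + Û₂Σ̂₂V̂₂^T, where [U₁ U₂] and [V₁ V₂] (and likewise [Û₁ Û₂], [V̂₁ V̂₂]) have orthonormal columns, U₁, Û₁ have p columns, and Σ₁, Σ₂, Σ̂₁, Σ̂₂ are diagonal matrices with nonnegative diagonal entries (singular values). Suppose there is ᾱ > 0 such that every diagonal entry σ of Σ̂₁ and every diagonal entry τ of Σ₂ satisfy |σ − τ| ≥ ᾱ, and every diagonal entry σ of Σ̂₁ satisfies σ ≥ ᾱ. Then ‖ V₁V₁^T − V̂₁V̂₁^T ‖_F ≤ (2/ᾱ)·‖ B − B̂ ‖_F. -/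
/-!
Let `X = V₂ᵀV̂₁` and `Z = QV̂₁`, where `Q = 1 - V₁V₁ᵀ - V₂V₂ᵀ`: the components of `V̂₁` along
`V₂` and orthogonal to `[V₁ V₂]`. Since `V̂₁ = V₁(V₁ᵀV̂₁) + V₂X + Z`, a trace computation gives
`‖V₁V₁ᵀ - V̂₁V̂₁ᵀ‖² = 2 (‖X‖² + ‖Z‖²)`.

With `R = B̂ - B` and `Y = U₂ᵀÛ₁`, the singular-vector relations `B̂V̂₁ = Û₁Σ̂₁`, `B̂ᵀÛ₁ = V̂₁Σ̂₁`,
`BV₂ = U₂Σ₂`, `BᵀU₂ = V₂Σ₂`, `BQ = 0` turn into the Sylvester equations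
`XΣ̂₁ - Σ₂Y = V₂ᵀRᵀÛ₁`, `Σ₂X - YΣ̂₁ = -U₂ᵀRV̂₁` and `ZΣ̂₁ = QRᵀÛ₁`. Read entrywise, the gap `ᾱ`
yields `ᾱ²‖X‖² ≤ ‖V₂ᵀRᵀÛ₁‖² + ‖U₂ᵀRV̂₁‖²` and `ᾱ²‖Z‖² ≤ ‖QRᵀÛ₁‖²`. Multiplying by matrices with
orthonormal columns does not increase the Frobenius norm, and `V₂ᵀ` and `Q` split `RᵀÛ₁`
orthogonally, so the right-hand sides add up to at most `2‖R‖²`.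
-/

open Matrix

/-- The Frobenius norm of a matrix. -/
noncomputable def frobNorm {n m : ℕ} (M : Matrix (Fin n) (Fin m) ℝ) : ℝ :=
  Real.sqrt (∑ i, ∑ j, M i j ^ 2)

section FrobeniusSquare

variable {k k' l m n : Type*} [Fintype k] [Fintype k'] [Fintype l] [Fintype m] [Fintype n]

noncomputable def frobSq (M : Matrix m n ℝ) : ℝ := ∑ i, ∑ j, M i j ^ 2

lemma frobNorm_eq_sqrt_frobSq {a b : ℕ} (M : Matrix (Fin a) (Fin b) ℝ) :
    frobNorm M = √(frobSq M) := rfl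

lemma frobSq_nonneg (M : Matrix m n ℝ) : 0 ≤ frobSq M := by
  unfold frobSq; positivity

lemma frobSq_transpose (M : Matrix m n ℝ) : frobSq Mᵀ = frobSq M :=
  Finset.sum_comm

lemma frobSq_neg (M : Matrix m n ℝ) : frobSq (-M) = frobSq M := by
  simp [frobSq]

lemma frobSq_sub_comm (A C : Matrix m n ℝ) : frobSq (A - C) = frobSq (C - A) := by
  rw [← neg_sub, frobSq_neg]

lemma frobSq_eq_trace (M : Matrix m n ℝ) : frobSq M = trace (Mᵀ * M) := by
  simp only [frobSq, trace, diag, mul_apply, transpose_apply, sq]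
  exact Finset.sum_comm

lemma trace_mul_transpose_eq_frobSq (M : Matrix m n ℝ) : trace (M * Mᵀ) = frobSq M := by
  rw [← frobSq_transpose, frobSq_eq_trace, transpose_transpose]

lemma frobSq_mul_left (A : Matrix k m ℝ) (M : Matrix m n ℝ) :
    frobSq (A * M) = trace (Aᵀ * A * (M * Mᵀ)) := by
  rw [frobSq_eq_trace, transpose_mul, Matrix.mul_assoc, ← Matrix.mul_assoc Aᵀ, trace_mul_comm,
    Matrix.mul_assoc]

variable [DecidableEq m]

lemma frobSq_mul_add_frobSq_mul (A₁ : Matrix k m ℝ) (A₂ : Matrix k' m ℝ) (M : Matrix m n ℝ)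
    (h : A₁ᵀ * A₁ + A₂ᵀ * A₂ = 1) :
    frobSq (A₁ * M) + frobSq (A₂ * M) = frobSq M := by
  rw [frobSq_mul_left, frobSq_mul_left, ← trace_add, ← Matrix.add_mul, h, Matrix.one_mul,
    trace_mul_transpose_eq_frobSq]

lemma frobSq_mul_add_frobSq_mul_add_frobSq_mul (A₁ : Matrix k m ℝ) (A₂ : Matrix k' m ℝ)
    (A₃ : Matrix l m ℝ) (M : Matrix m n ℝ) (h : A₁ᵀ * A₁ + A₂ᵀ * A₂ + A₃ᵀ * A₃ = 1) :
    frobSq (A₁ * M) + frobSq (A₂ * M) + frobSq (A₃ * M) = frobSq M := by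
  rw [frobSq_mul_left, frobSq_mul_left, frobSq_mul_left, ← trace_add, ← trace_add,
    ← Matrix.add_mul, ← Matrix.add_mul, h, Matrix.one_mul,
    trace_mul_transpose_eq_frobSq]

end FrobeniusSquare

section OrthonormalColumns

variable {k l m n : Type*} [Fintype k] [Fintype l] [Fintype m] [Fintype n] [DecidableEq k]

lemma mul_transpose_mul_mul_transpose {W : Matrix m k ℝ} (hW : Wᵀ * W = 1) :
    W * Wᵀ * (W * Wᵀ) = W * Wᵀ := by
  rw [Matrix.mul_assoc, ← Matrix.mul_assoc Wᵀ, hW, Matrix.one_mul]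

lemma frobSq_transpose_mul_le [DecidableEq m] {W : Matrix m k ℝ} (hW : Wᵀ * W = 1)
    (M : Matrix m n ℝ) :
    frobSq (Wᵀ * M) ≤ frobSq M := by
  have hgram : Wᵀᵀ * Wᵀ + (1 - W * Wᵀ)ᵀ * (1 - W * Wᵀ) = 1 := by
    simp only [transpose_transpose, transpose_sub, transpose_one, transpose_mul, Matrix.sub_mul,
      Matrix.mul_sub, Matrix.one_mul, Matrix.mul_one, mul_transpose_mul_mul_transpose hW]
    abel
  linarith [frobSq_mul_add_frobSq_mul Wᵀ (1 - W * Wᵀ) M hgram,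
    frobSq_nonneg ((1 - W * Wᵀ) * M)]

lemma frobSq_mul_le [DecidableEq m] {W : Matrix m k ℝ} (hW : Wᵀ * W = 1) (M : Matrix n m ℝ) :
    frobSq (M * W) ≤ frobSq M := by
  simpa only [← frobSq_transpose (M * W), transpose_mul, frobSq_transpose]
    using frobSq_transpose_mul_le hW Mᵀ

lemma frobSq_eq_card {W : Matrix m k ℝ} (hW : Wᵀ * W = 1) : frobSq W = Fintype.card k := by
  rw [frobSq_eq_trace, hW, trace_one]

lemma frobSq_mul_transpose_sub_mul_transpose [DecidableEq l] {W : Matrix m k ℝ}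
    {W' : Matrix m l ℝ} (hW : Wᵀ * W = 1) (hW' : W'ᵀ * W' = 1) :
    frobSq (W * Wᵀ - W' * W'ᵀ) = frobSq W + frobSq W' - 2 * frobSq (Wᵀ * W') := by
  have hcross : trace (W * Wᵀ * (W' * W'ᵀ)) = frobSq (Wᵀ * W') := by
    rw [frobSq_eq_trace, transpose_mul, transpose_transpose, Matrix.mul_assoc W'ᵀ,
      trace_mul_comm W'ᵀ]
    simp only [Matrix.mul_assoc]
  rw [frobSq_eq_trace, transpose_sub, transpose_mul, transpose_mul, transpose_transpose,
    transpose_transpose, Matrix.sub_mul, Matrix.mul_sub, Matrix.mul_sub, trace_sub, trace_sub,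
    trace_sub, mul_transpose_mul_mul_transpose hW, mul_transpose_mul_mul_transpose hW',
    trace_mul_transpose_eq_frobSq, trace_mul_transpose_eq_frobSq, hcross,
    trace_mul_comm (W' * W'ᵀ), hcross]
  ring

end OrthonormalColumns

lemma transpose_mul_eq_zero_symm {k l m : Type*} [Fintype m] {A : Matrix m k ℝ}
    {C : Matrix m l ℝ} (h : Aᵀ * C = 0) : Cᵀ * A = 0 := by
  simpa using congrArg transpose h

section ComplementProjection

variable {k l m : Type*} [Fintype k] [Fintype l] [DecidableEq m] {W₁ : Matrix m k ℝ}
  {W₂ : Matrix m l ℝ}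

noncomputable def complProj (W₁ : Matrix m k ℝ) (W₂ : Matrix m l ℝ) : Matrix m m ℝ :=
  1 - W₁ * W₁ᵀ - W₂ * W₂ᵀ

lemma transpose_complProj : (complProj W₁ W₂)ᵀ = complProj W₁ W₂ := by
  simp [complProj, transpose_sub]

lemma complProj_mul_left [Fintype m] [DecidableEq k] (h₁ : W₁ᵀ * W₁ = 1)
    (h₁₂ : W₁ᵀ * W₂ = 0) : complProj W₁ W₂ * W₁ = 0 := by
  rw [complProj, Matrix.sub_mul, Matrix.sub_mul, Matrix.mul_assoc, h₁, Matrix.mul_assoc,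
    transpose_mul_eq_zero_symm h₁₂]
  simp

lemma complProj_mul_right [Fintype m] [DecidableEq l] (h₂ : W₂ᵀ * W₂ = 1)
    (h₁₂ : W₁ᵀ * W₂ = 0) : complProj W₁ W₂ * W₂ = 0 := by
  rw [complProj, Matrix.sub_mul, Matrix.sub_mul, Matrix.mul_assoc, h₁₂, Matrix.mul_assoc, h₂]
  simp

lemma frobSq_add_frobSq_add_frobSq_complProj {n : Type*} [Fintype m] [Fintype n]
    [DecidableEq k] [DecidableEq l] (h₁ : W₁ᵀ * W₁ = 1) (h₂ : W₂ᵀ * W₂ = 1)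
    (h₁₂ : W₁ᵀ * W₂ = 0) (M : Matrix m n ℝ) :
    frobSq (W₁ᵀ * M) + frobSq (W₂ᵀ * M) + frobSq (complProj W₁ W₂ * M) = frobSq M := by
  refine frobSq_mul_add_frobSq_mul_add_frobSq_mul _ _ _ M ?_
  have hidem : complProj W₁ W₂ * complProj W₁ W₂ = complProj W₁ W₂ := by
    conv_lhs => enter [2]; rw [complProj]
    rw [Matrix.mul_sub, Matrix.mul_sub, ← Matrix.mul_assoc, ← Matrix.mul_assoc,
      complProj_mul_left h₁ h₁₂, complProj_mul_right h₂ h₁₂]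
    simp
  rw [transpose_complProj, hidem, transpose_transpose, transpose_transpose, complProj]
  abel

lemma frobSq_transpose_mul_add_frobSq_complProj_mul_le {n : Type*} [Fintype m] [Fintype n]
    [DecidableEq k] [DecidableEq l] (h₁ : W₁ᵀ * W₁ = 1) (h₂ : W₂ᵀ * W₂ = 1)
    (h₁₂ : W₁ᵀ * W₂ = 0) (M : Matrix m n ℝ) :
    frobSq (W₂ᵀ * M) + frobSq (complProj W₁ W₂ * M) ≤ frobSq M := by
  linarith [frobSq_add_frobSq_add_frobSq_complProj h₁ h₂ h₁₂ M, frobSq_nonneg (W₁ᵀ * M)]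

lemma frobSq_mul_transpose_sub_eq_two_mul [Fintype m] [DecidableEq k] [DecidableEq l]
    {W : Matrix m k ℝ} (hW : Wᵀ * W = 1) (h₁ : W₁ᵀ * W₁ = 1) (h₂ : W₂ᵀ * W₂ = 1)
    (h₁₂ : W₁ᵀ * W₂ = 0) :
    frobSq (W₁ * W₁ᵀ - W * Wᵀ) = 2 * (frobSq (W₂ᵀ * W) + frobSq (complProj W₁ W₂ * W)) := by
  have hpyth := frobSq_add_frobSq_add_frobSq_complProj h₁ h₂ h₁₂ W
  rw [frobSq_eq_card hW] at hpyth
  rw [frobSq_mul_transpose_sub_mul_transpose h₁ hW, frobSq_eq_card h₁, frobSq_eq_card hW]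
  linarith

end ComplementProjection

section TwoBlockDecomposition

variable {k k' l l' m n : Type*} [Fintype k] [Fintype l] [Fintype m] [DecidableEq k]
  [DecidableEq l] {B : Matrix n m ℝ} {U₁ : Matrix n k' ℝ} {U₂ : Matrix n l' ℝ} {D₁ : Matrix k' k ℝ}
  {D₂ : Matrix l' l ℝ} {V₁ : Matrix m k ℝ} {V₂ : Matrix m l ℝ}

lemma decomp_mul_right_frames [Fintype k'] [Fintype l'] (hB : B = U₁ * D₁ * V₁ᵀ + U₂ * D₂ * V₂ᵀ)
    (h₁ : V₁ᵀ * V₁ = 1) (h₂ : V₂ᵀ * V₂ = 1) (h₁₂ : V₁ᵀ * V₂ = 0) :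
    B * V₁ = U₁ * D₁ ∧ B * V₂ = U₂ * D₂ := by
  simp only [hB, Matrix.add_mul, Matrix.mul_assoc, h₁, h₂, h₁₂, transpose_mul_eq_zero_symm h₁₂,
    Matrix.mul_one, Matrix.mul_zero, add_zero, zero_add, and_self]

lemma decomp_mul_complProj [Fintype k'] [Fintype l'] [DecidableEq m]
    (hB : B = U₁ * D₁ * V₁ᵀ + U₂ * D₂ * V₂ᵀ) (h₁ : V₁ᵀ * V₁ = 1) (h₂ : V₂ᵀ * V₂ = 1)
    (h₁₂ : V₁ᵀ * V₂ = 0) : B * complProj V₁ V₂ = 0 := by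
  obtain ⟨hBV₁, hBV₂⟩ := decomp_mul_right_frames hB h₁ h₂ h₁₂
  rw [complProj, Matrix.mul_sub, Matrix.mul_sub, Matrix.mul_one, ← Matrix.mul_assoc,
    ← Matrix.mul_assoc, hBV₁, hBV₂, hB]
  abel

end TwoBlockDecomposition

lemma decomp_transpose_mul_left_frames {k k' l l' m n : Type*} [Fintype k] [Fintype k']
    [Fintype l] [Fintype l'] [Fintype n] [DecidableEq k] [DecidableEq l] {B : Matrix n m ℝ}
    {U₁ : Matrix n k ℝ} {U₂ : Matrix n l ℝ} {D₁ : Matrix k k' ℝ} {D₂ : Matrix l l' ℝ}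
    {V₁ : Matrix m k' ℝ} {V₂ : Matrix m l' ℝ} (hB : B = U₁ * D₁ * V₁ᵀ + U₂ * D₂ * V₂ᵀ)
    (h₁ : U₁ᵀ * U₁ = 1) (h₂ : U₂ᵀ * U₂ = 1) (h₁₂ : U₁ᵀ * U₂ = 0) :
    Bᵀ * U₁ = V₁ * D₁ᵀ ∧ Bᵀ * U₂ = V₂ * D₂ᵀ := by
  refine decomp_mul_right_frames ?_ h₁ h₂ h₁₂
  simp only [hB, transpose_add, transpose_mul, transpose_transpose, Matrix.mul_assoc]

lemma sq_mul_sq_le_of_sylvester {a s t x y : ℝ} (ha : 0 ≤ a) (hs : 0 < s) (ht : 0 ≤ t)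
    (hsep : a ≤ |s - t|) :
    a ^ 2 * x ^ 2 ≤ (x * s - t * y) ^ 2 + (t * x - y * s) ^ 2 := by
  set e := x * s - t * y
  set f := t * x - y * s
  have hgap : a ^ 2 ≤ (s - t) ^ 2 := by simpa only [sq_abs] using pow_le_pow_left₀ ha hsep 2
  have helim : x * (s ^ 2 - t ^ 2) = s * e - t * f := by ring
  -- `(s + t)² (e² + f²) - (s e - t f)² = (s f + t e)² + 2 s t (e² + f²)`
  have hcs : (s * e - t * f) ^ 2 ≤ (s + t) ^ 2 * (e ^ 2 + f ^ 2) := by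
    nlinarith [sq_nonneg (s * f + t * e), mul_nonneg (mul_nonneg hs.le ht)
      (add_nonneg (sq_nonneg e) (sq_nonneg f))]
  have hscaled : (s + t) ^ 2 * (a ^ 2 * x ^ 2) ≤ (s + t) ^ 2 * (e ^ 2 + f ^ 2) :=
    calc (s + t) ^ 2 * (a ^ 2 * x ^ 2) ≤ (s + t) ^ 2 * ((s - t) ^ 2 * x ^ 2) := by gcongr
      _ = (x * (s ^ 2 - t ^ 2)) ^ 2 := by ring
      _ ≤ (s + t) ^ 2 * (e ^ 2 + f ^ 2) := helim ▸ hcs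
  exact le_of_mul_le_mul_left hscaled (by positivity)

section DiagonalBounds

variable {k l : Type*} [Fintype k] [Fintype l] [DecidableEq k] {a : ℝ} {s : k → ℝ}

lemma sq_mul_frobSq_le_of_sylvester [DecidableEq l] {t : l → ℝ} (ha : 0 ≤ a)
    (hs : ∀ i, 0 < s i) (ht : ∀ j, 0 ≤ t j) (hsep : ∀ i j, a ≤ |s i - t j|)
    (X Y : Matrix l k ℝ) :
    a ^ 2 * frobSq X ≤
      frobSq (X * diagonal s - diagonal t * Y) + frobSq (diagonal t * X - Y * diagonal s) := by
  simp only [frobSq, Finset.mul_sum, ← Finset.sum_add_distrib, Matrix.sub_apply, mul_diagonal,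
    diagonal_mul]
  gcongr with j _ i _
  exact sq_mul_sq_le_of_sylvester ha (hs i) (ht j) (hsep i j)

lemma sq_mul_frobSq_le_frobSq_mul_diagonal (ha : 0 ≤ a) (hs : ∀ i, a ≤ s i)
    (Z : Matrix l k ℝ) : a ^ 2 * frobSq Z ≤ frobSq (Z * diagonal s) := by
  simp only [frobSq, Finset.mul_sum, mul_diagonal, mul_pow]
  refine Finset.sum_le_sum fun j _ => Finset.sum_le_sum fun i _ => ?_
  rw [mul_comm]
  exact mul_le_mul_of_nonneg_left (pow_le_pow_left₀ ha (hs i) 2) (sq_nonneg _)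

end DiagonalBounds

section SinTheta

variable {k l m n r : Type*} [Fintype k] [Fintype l] [Fintype m] [Fintype n] [DecidableEq k]
  {B Bh : Matrix n m ℝ} {Uh₁ : Matrix n k ℝ} {Vh₁ : Matrix m k ℝ} {s : k → ℝ} {a : ℝ}

lemma sq_mul_frobSq_transpose_mul_le [DecidableEq l] {U₂ : Matrix n l ℝ} {V₂ : Matrix m l ℝ}
    {t : l → ℝ} (hBV : B * V₂ = U₂ * diagonal t) (hBU : Bᵀ * U₂ = V₂ * diagonal t)
    (hBhV : Bh * Vh₁ = Uh₁ * diagonal s) (hBhU : Bhᵀ * Uh₁ = Vh₁ * diagonal s)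
    (ha : 0 ≤ a) (hs : ∀ i, 0 < s i) (ht : ∀ j, 0 ≤ t j) (hsep : ∀ i j, a ≤ |s i - t j|) :
    a ^ 2 * frobSq (V₂ᵀ * Vh₁) ≤
      frobSq (V₂ᵀ * ((Bh - B)ᵀ * Uh₁)) + frobSq (U₂ᵀ * ((B - Bh) * Vh₁)) := by
  have hV₂B : V₂ᵀ * Bᵀ = diagonal t * U₂ᵀ := by simpa using congrArg transpose hBV
  have hU₂B : U₂ᵀ * B = diagonal t * V₂ᵀ := by simpa using congrArg transpose hBU
  have hE : V₂ᵀ * ((Bh - B)ᵀ * Uh₁) = V₂ᵀ * Vh₁ * diagonal s - diagonal t * (U₂ᵀ * Uh₁) := by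
    rw [transpose_sub, Matrix.sub_mul, Matrix.mul_sub, hBhU, ← Matrix.mul_assoc V₂ᵀ Bᵀ, hV₂B]
    simp only [Matrix.mul_assoc]
  have hF : U₂ᵀ * ((B - Bh) * Vh₁) = diagonal t * (V₂ᵀ * Vh₁) - U₂ᵀ * Uh₁ * diagonal s := by
    rw [Matrix.sub_mul, Matrix.mul_sub, hBhV, ← Matrix.mul_assoc U₂ᵀ B, hU₂B]
    simp only [Matrix.mul_assoc]
  rw [hE, hF]
  exact sq_mul_frobSq_le_of_sylvester ha hs ht hsep _ _

lemma sq_mul_frobSq_mul_le [Fintype r] {Q : Matrix r m ℝ} (hQB : Q * Bᵀ = 0)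
    (hBhU : Bhᵀ * Uh₁ = Vh₁ * diagonal s) (ha : 0 ≤ a) (hs : ∀ i, a ≤ s i) :
    a ^ 2 * frobSq (Q * Vh₁) ≤ frobSq (Q * ((Bh - B)ᵀ * Uh₁)) := by
  rw [transpose_sub, Matrix.sub_mul, Matrix.mul_sub, hBhU, ← Matrix.mul_assoc Q Bᵀ, hQB,
    Matrix.zero_mul, sub_zero, ← Matrix.mul_assoc]
  exact sq_mul_frobSq_le_frobSq_mul_diagonal ha hs _

end SinTheta

lemma frobNorm_le_div_mul_frobNorm {a b c d : ℕ} {A : Matrix (Fin a) (Fin b) ℝ}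
    {C : Matrix (Fin c) (Fin d) ℝ} {α κ : ℝ} (hα : 0 < α) (hκ : 0 ≤ κ)
    (h : α ^ 2 * frobSq A ≤ κ ^ 2 * frobSq C) : frobNorm A ≤ κ / α * frobNorm C := by
  rw [frobNorm_eq_sqrt_frobSq, frobNorm_eq_sqrt_frobSq]
  calc √(frobSq A) ≤ √((κ / α) ^ 2 * frobSq C) := by
        refine Real.sqrt_le_sqrt ?_
        rw [div_pow, div_mul_eq_mul_div, le_div_iff₀ (by positivity)]
        linarith
    _ = κ / α * √(frobSq C) := by
        rw [Real.sqrt_mul (by positivity), Real.sqrt_sq (by positivity)]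

theorem statement12_general
    (n m p p₂ : ℕ) (B Bh : Matrix (Fin n) (Fin m) ℝ)
    (U₁ Uh₁ : Matrix (Fin n) (Fin p) ℝ) (U₂ Uh₂ : Matrix (Fin n) (Fin p₂) ℝ)
    (V₁ Vh₁ : Matrix (Fin m) (Fin p) ℝ) (V₂ Vh₂ : Matrix (Fin m) (Fin p₂) ℝ)
    (σ₁ σh₁ : Fin p → ℝ) (σ₂ σh₂ : Fin p₂ → ℝ)
    -- orthonormal columns of `[U₁ U₂]`, `[V₁ V₂]`, `[Û₁ Û₂]`, `[V̂₁ V̂₂]`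
    (hU : U₁ᵀ * U₁ = 1 ∧ U₂ᵀ * U₂ = 1 ∧ U₁ᵀ * U₂ = 0)
    (hV : V₁ᵀ * V₁ = 1 ∧ V₂ᵀ * V₂ = 1 ∧ V₁ᵀ * V₂ = 0)
    (hUh : Uh₁ᵀ * Uh₁ = 1 ∧ Uh₂ᵀ * Uh₂ = 1 ∧ Uh₁ᵀ * Uh₂ = 0)
    (hVh : Vh₁ᵀ * Vh₁ = 1 ∧ Vh₂ᵀ * Vh₂ = 1 ∧ Vh₁ᵀ * Vh₂ = 0)
    -- nonnegative singular values
    (hσ₂ : ∀ i, 0 ≤ σ₂ i)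
    -- the singular value decompositions
    (hB : B = U₁ * diagonal σ₁ * V₁ᵀ + U₂ * diagonal σ₂ * V₂ᵀ)
    (hBh : Bh = Uh₁ * diagonal σh₁ * Vh₁ᵀ + Uh₂ * diagonal σh₂ * Vh₂ᵀ)
    -- the separation conditions
    (αb : ℝ) (hαb : 0 < αb)
    (hsep : ∀ (i : Fin p) (j : Fin p₂), αb ≤ |σh₁ i - σ₂ j|)
    (hsep0 : ∀ i : Fin p, αb ≤ σh₁ i) :
    frobNorm (V₁ * V₁ᵀ - Vh₁ * Vh₁ᵀ) ≤ 2 / αb * frobNorm (B - Bh) := by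
  obtain ⟨hU₁, hU₂, hU₁₂⟩ := hU
  obtain ⟨hV₁, hV₂, hV₁₂⟩ := hV
  obtain ⟨hUh₁, hUh₂, hUh₁₂⟩ := hUh
  obtain ⟨hVh₁, hVh₂, hVh₁₂⟩ := hVh
  obtain ⟨-, hBV₂⟩ := decomp_mul_right_frames hB hV₁ hV₂ hV₁₂
  obtain ⟨-, hBU₂⟩ := decomp_transpose_mul_left_frames hB hU₁ hU₂ hU₁₂
  obtain ⟨hBhV₁, -⟩ := decomp_mul_right_frames hBh hVh₁ hVh₂ hVh₁₂
  obtain ⟨hBhU₁, -⟩ := decomp_transpose_mul_left_frames hBh hUh₁ hUh₂ hUh₁₂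
  rw [diagonal_transpose] at hBU₂ hBhU₁
  have hQB : complProj V₁ V₂ * Bᵀ = 0 := by
    rw [← transpose_complProj, ← transpose_mul, decomp_mul_complProj hB hV₁ hV₂ hV₁₂,
      transpose_zero]
  have hσh₁ : ∀ i, 0 < σh₁ i := fun i => hαb.trans_le (hsep0 i)
  have hX := sq_mul_frobSq_transpose_mul_le hBV₂ hBU₂ hBhV₁ hBhU₁ hαb.le hσh₁ hσ₂ hsep
  have hZ := sq_mul_frobSq_mul_le hQB hBhU₁ hαb.le hsep0
  have hproj := frobSq_mul_transpose_sub_eq_two_mul hVh₁ hV₁ hV₂ hV₁₂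
  have hsplit := frobSq_transpose_mul_add_frobSq_complProj_mul_le hV₁ hV₂ hV₁₂ ((Bh - B)ᵀ * Uh₁)
  have hRU : frobSq ((Bh - B)ᵀ * Uh₁) ≤ frobSq (B - Bh) :=
    (frobSq_mul_le hUh₁ _).trans_eq (by rw [frobSq_transpose, frobSq_sub_comm])
  have hRV : frobSq (U₂ᵀ * ((B - Bh) * Vh₁)) ≤ frobSq (B - Bh) :=
    (frobSq_transpose_mul_le hU₂ _).trans (frobSq_mul_le hVh₁ _)
  refine frobNorm_le_div_mul_frobNorm hαb zero_le_two ?_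
  rw [hproj]
  linarith

/-- Wedin's bound, stability of invariant subspaces of the SVD.
If `B = U₁ Σ₁ V₁ᵀ + U₂ Σ₂ V₂ᵀ` and `B̂ = Û₁ Σ̂₁ V̂₁ᵀ + Û₂ Σ̂₂ V̂₂ᵀ` with `[U₁ U₂]`, `[V₁ V₂]`,
`[Û₁ Û₂]`, `[V̂₁ V̂₂]` having orthonormal columns and nonnegative diagonal `Σ`'s, and if each
singular value of `Σ̂₁` is at least `ᾱ` and is at distance at least `ᾱ` from each singular
value of `Σ₂`, then `‖V₁V₁ᵀ - V̂₁V̂₁ᵀ‖_F ≤ (2/ᾱ) ‖B - B̂‖_F`. -/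
theorem statement12
    (n m p p₂ : ℕ) (B Bh : Matrix (Fin n) (Fin m) ℝ)
    (U₁ Uh₁ : Matrix (Fin n) (Fin p) ℝ) (U₂ Uh₂ : Matrix (Fin n) (Fin p₂) ℝ)
    (V₁ Vh₁ : Matrix (Fin m) (Fin p) ℝ) (V₂ Vh₂ : Matrix (Fin m) (Fin p₂) ℝ)
    (σ₁ σh₁ : Fin p → ℝ) (σ₂ σh₂ : Fin p₂ → ℝ)
    -- orthonormal columns of `[U₁ U₂]`, `[V₁ V₂]`, `[Û₁ Û₂]`, `[V̂₁ V̂₂]`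
    (hU : U₁ᵀ * U₁ = 1 ∧ U₂ᵀ * U₂ = 1 ∧ U₁ᵀ * U₂ = 0)
    (hV : V₁ᵀ * V₁ = 1 ∧ V₂ᵀ * V₂ = 1 ∧ V₁ᵀ * V₂ = 0)
    (hUh : Uh₁ᵀ * Uh₁ = 1 ∧ Uh₂ᵀ * Uh₂ = 1 ∧ Uh₁ᵀ * Uh₂ = 0)
    (hVh : Vh₁ᵀ * Vh₁ = 1 ∧ Vh₂ᵀ * Vh₂ = 1 ∧ Vh₁ᵀ * Vh₂ = 0)
    -- nonnegative singular values
    (hσ₁ : ∀ i, 0 ≤ σ₁ i) (hσ₂ : ∀ i, 0 ≤ σ₂ i) (hσh₁ : ∀ i, 0 ≤ σh₁ i)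
    (hσh₂ : ∀ i, 0 ≤ σh₂ i)
    -- the singular value decompositions
    (hB : B = U₁ * diagonal σ₁ * V₁ᵀ + U₂ * diagonal σ₂ * V₂ᵀ)
    (hBh : Bh = Uh₁ * diagonal σh₁ * Vh₁ᵀ + Uh₂ * diagonal σh₂ * Vh₂ᵀ)
    -- the separation conditions
    (αb : ℝ) (hαb : 0 < αb)
    (hsep : ∀ (i : Fin p) (j : Fin p₂), αb ≤ |σh₁ i - σ₂ j|)
    (hsep0 : ∀ i : Fin p, αb ≤ σh₁ i) :
    frobNorm (V₁ * V₁ᵀ - Vh₁ * Vh₁ᵀ) ≤ 2 / αb * frobNorm (B - Bh) :=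
  statement12_general n m p p₂ B Bh U₁ Uh₁ U₂ Uh₂ V₁ Vh₁ V₂ Vh₂ σ₁ σh₁ σ₂ σh₂ hU hV hUh hVh hσ₂ hB
    hBh αb hαb hsep hsep0
end

section
/- Let A and Â be k×d real matrices with AA^T = I_k and ÂÂ^T = I_k, let ε̄ ≥ 0, and let g : B_{ℝ^k}(1+ε̄) → ℝ be continuously differentiable with |∂_i g(y)| ≤ C₂ for all i and all y. If ‖A^TA − Â^TÂ‖_F ≤ δ, then for every x ∈ B_{ℝ^d}(1+ε̄) one has Âx, A(Â^TÂx) ∈ closed balls of radius 1+ε̄ and |g(Ax) − g(A Â^T Â x)| ≤ C₂·√k·(1+ε̄)·δ. In particular, setting f(x) := g(Ax) and f̂(x) := g(A(Â^TÂx)), sup_{x ∈ B_{ℝ^d}(1+ε̄)} |f(x) − f̂(x)| ≤ C₂√k(1+ε̄)δ. -/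
open Matrix

/-! The estimate is the mean value inequality for `g` on the convex ball, whose Lipschitz
constant is `√k C₂` since each partial derivative is bounded by `C₂`. The two arguments differ
by `A (AᵀA - ÂᵀÂ) x`, because `A = A AᵀA`; and a matrix with orthonormal rows is a contraction,
so this difference is at most `‖AᵀA - ÂᵀÂ‖_F ‖x‖ ≤ δ (1 + ε̄)`. -/

theorem Convex.norm_image_sub_le_of_norm_hasGradientWithin_le {F : Type*}
    [NormedAddCommGroup F] [InnerProductSpace ℝ F] [CompleteSpace F] {s : Set F}
    (hs : Convex ℝ s) {g : F → ℝ} {G : F → F} {C : ℝ}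
    (hg : ∀ y ∈ s, HasGradientWithinAt g (G y) s y) (hG : ∀ y ∈ s, ‖G y‖ ≤ C)
    {x y : F} (hx : x ∈ s) (hy : y ∈ s) : |g x - g y| ≤ C * ‖x - y‖ :=
  hs.norm_image_sub_le_of_norm_hasFDerivWithin_le (fun z hz => (hg z hz).hasFDerivWithinAt)
    (fun z hz => by rw [LinearIsometryEquiv.norm_map]; exact hG z hz) hy hx

theorem EuclideanSpace.norm_le_sqrt_card_mul_of_forall_abs_le {ι : Type*} [Fintype ι]
    {v : EuclideanSpace ℝ ι} {C : ℝ} (hv : ∀ i, |v i| ≤ C) :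
    ‖v‖ ≤ √(Fintype.card ι) * C := by
  cases isEmpty_or_nonempty ι with
  | inl _ => simp [Subsingleton.elim v 0]
  | inr hι =>
    obtain ⟨i₀⟩ := hι
    have hC : 0 ≤ C := (abs_nonneg _).trans (hv i₀)
    calc ‖v‖ = √(∑ i, v i ^ 2) := by
          rw [← EuclideanSpace.real_norm_sq_eq, Real.sqrt_sq (norm_nonneg v)]
      _ ≤ √(∑ _i : ι, C ^ 2) := Real.sqrt_le_sqrt (Finset.sum_le_sum fun i _ =>
        sq_le_sq.2 ((hv i).trans (le_abs_self C)))
      _ = √(Fintype.card ι) * C := by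
        rw [Finset.sum_const, Finset.card_univ, nsmul_eq_mul, Real.sqrt_mul (Nat.cast_nonneg _),
          Real.sqrt_sq hC]

section EuclideanMulVec

variable {m n : Type*} [Fintype m] [Fintype n]

theorem inner_toLp_mulVec_toLp (A : Matrix m n ℝ) (v : n → ℝ) (w : m → ℝ) :
    inner ℝ (WithLp.toLp 2 (A *ᵥ v) : EuclideanSpace ℝ m) (WithLp.toLp 2 w) =
      inner ℝ (WithLp.toLp 2 v : EuclideanSpace ℝ n) (WithLp.toLp 2 (Aᵀ *ᵥ w)) := by
  simp only [EuclideanSpace.inner_toLp_toLp, star_trivial, dotProduct_mulVec, mulVec_transpose,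
    dotProduct_comm]

theorem norm_toLp_transpose_mulVec [DecidableEq m] {A : Matrix m n ℝ} (hA : A * Aᵀ = 1)
    (w : m → ℝ) :
    ‖(WithLp.toLp 2 (Aᵀ *ᵥ w) : EuclideanSpace ℝ n)‖ =
      ‖(WithLp.toLp 2 w : EuclideanSpace ℝ m)‖ := by
  refine (sq_eq_sq₀ (norm_nonneg _) (norm_nonneg _)).1 ?_
  rw [← real_inner_self_eq_norm_sq, ← real_inner_self_eq_norm_sq, real_inner_comm,
    ← inner_toLp_mulVec_toLp, mulVec_mulVec, hA, one_mulVec]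

theorem norm_toLp_mulVec_le [DecidableEq m] {A : Matrix m n ℝ} (hA : A * Aᵀ = 1) (v : n → ℝ) :
    ‖(WithLp.toLp 2 (A *ᵥ v) : EuclideanSpace ℝ m)‖ ≤
      ‖(WithLp.toLp 2 v : EuclideanSpace ℝ n)‖ := by
  set V : EuclideanSpace ℝ n := WithLp.toLp 2 v
  set AV : EuclideanSpace ℝ m := WithLp.toLp 2 (A *ᵥ v)
  have hsq : ‖AV‖ ^ 2 ≤ ‖V‖ * ‖AV‖ :=
    calc ‖AV‖ ^ 2 = inner ℝ V (WithLp.toLp 2 (Aᵀ *ᵥ (A *ᵥ v))) := by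
          rw [← real_inner_self_eq_norm_sq, inner_toLp_mulVec_toLp]
      _ ≤ ‖V‖ * ‖(WithLp.toLp 2 (Aᵀ *ᵥ (A *ᵥ v)) : EuclideanSpace ℝ n)‖ :=
          real_inner_le_norm _ _
      _ = ‖V‖ * ‖AV‖ := by rw [norm_toLp_transpose_mulVec hA]
  nlinarith [norm_nonneg AV, norm_nonneg V]

end EuclideanMulVec

theorem mulVec_sub_mulVec_transpose_mul_self {R : Type*} [CommRing R] {m n p : Type*}
    [Fintype m] [Fintype n] [Fintype p] [DecidableEq m] {A : Matrix m n R} (hA : A * Aᵀ = 1)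
    (B : Matrix p n R) (x : n → R) :
    A *ᵥ x - A *ᵥ (Bᵀ *ᵥ (B *ᵥ x)) = A *ᵥ ((Aᵀ * A - Bᵀ * B) *ᵥ x) := by
  rw [sub_mulVec, mulVec_sub, ← mulVec_mulVec, ← mulVec_mulVec, mulVec_mulVec _ A Aᵀ, hA,
    one_mulVec]

theorem norm_toLp_mulVec_le_frobNorm_mul {n m : ℕ} (M : Matrix (Fin n) (Fin m) ℝ)
    (v : Fin m → ℝ) :
    ‖(WithLp.toLp 2 (M *ᵥ v) : EuclideanSpace ℝ (Fin n))‖ ≤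
      frobNorm M * ‖(WithLp.toLp 2 v : EuclideanSpace ℝ (Fin m))‖ := by
  have hrow : ∀ i, (M *ᵥ v) i ^ 2 ≤ (∑ j, M i j ^ 2) * ∑ j, v j ^ 2 := fun i =>
    Finset.sum_mul_sq_le_sq_mul_sq Finset.univ (M i) v
  rw [frobNorm, ← Real.sqrt_sq (norm_nonneg (WithLp.toLp 2 v : EuclideanSpace ℝ (Fin m))),
    ← Real.sqrt_mul (by positivity), ← Real.sqrt_sq (norm_nonneg _),
    EuclideanSpace.real_norm_sq_eq, EuclideanSpace.real_norm_sq_eq, Finset.sum_mul]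
  exact Real.sqrt_le_sqrt (Finset.sum_le_sum fun i _ => hrow i)

theorem statement17_general
    (d k : ℕ) (εb C₂ δ : ℝ) (hεb : 0 ≤ εb)
    (A Ah : Matrix (Fin k) (Fin d) ℝ) (hA : A * Aᵀ = 1) (hAh : Ah * Ahᵀ = 1)
    (g : EuclideanSpace ℝ (Fin k) → ℝ) (G : EuclideanSpace ℝ (Fin k) → EuclideanSpace ℝ (Fin k))
    (hg : ∀ y ∈ Metric.closedBall (0 : EuclideanSpace ℝ (Fin k)) (1 + εb),
      HasGradientWithinAt g (G y) (Metric.closedBall 0 (1 + εb)) y)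
    (hGbound : ∀ y ∈ Metric.closedBall (0 : EuclideanSpace ℝ (Fin k)) (1 + εb),
      ∀ i, |G y i| ≤ C₂)
    (hδ : frobNorm (Aᵀ * A - Ahᵀ * Ah) ≤ δ) :
    ∀ x : Fin d → ℝ, ∑ l, x l ^ 2 ≤ (1 + εb) ^ 2 →
      ((WithLp.toLp 2 (Ah.mulVec x) : EuclideanSpace ℝ (Fin k)) ∈
          Metric.closedBall (0 : EuclideanSpace ℝ (Fin k)) (1 + εb) ∧
        (WithLp.toLp 2 (A.mulVec (Ahᵀ.mulVec (Ah.mulVec x))) : EuclideanSpace ℝ (Fin k)) ∈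
          Metric.closedBall (0 : EuclideanSpace ℝ (Fin k)) (1 + εb)) ∧
      |g (WithLp.toLp 2 (A.mulVec x) : EuclideanSpace ℝ (Fin k)) -
          g (WithLp.toLp 2 (A.mulVec (Ahᵀ.mulVec (Ah.mulVec x))) : EuclideanSpace ℝ (Fin k))| ≤
        C₂ * Real.sqrt k * (1 + εb) * δ := by
  intro x hx
  have hr : 0 ≤ 1 + εb := by linarith
  have hxr : ‖(WithLp.toLp 2 x : EuclideanSpace ℝ (Fin d))‖ ≤ 1 + εb := by
    rw [← mem_closedBall_zero_iff, EuclideanSpace.closedBall_zero_eq _ hr]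
    exact hx
  have hAhx := (norm_toLp_mulVec_le hAh x).trans hxr
  have hAx := (norm_toLp_mulVec_le hA x).trans hxr
  have hAAhx :=
    (norm_toLp_mulVec_le hA _).trans ((norm_toLp_transpose_mulVec hAh _).trans_le hAhx)
  rw [← mem_closedBall_zero_iff] at hAhx hAx hAAhx
  refine ⟨⟨hAhx, hAAhx⟩, ?_⟩
  have hdiff : ‖(WithLp.toLp 2 (A *ᵥ x) - WithLp.toLp 2 (A *ᵥ (Ahᵀ *ᵥ (Ah *ᵥ x))) :
      EuclideanSpace ℝ (Fin k))‖ ≤ δ * (1 + εb) := by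
    rw [← WithLp.toLp_sub, mulVec_sub_mulVec_transpose_mul_self hA]
    refine (norm_toLp_mulVec_le hA _).trans ((norm_toLp_mulVec_le_frobNorm_mul _ x).trans ?_)
    exact mul_le_mul hδ hxr (norm_nonneg _) ((Real.sqrt_nonneg _).trans hδ)
  have hG : ∀ y ∈ Metric.closedBall (0 : EuclideanSpace ℝ (Fin k)) (1 + εb),
      ‖G y‖ ≤ √(k : ℝ) * C₂ := fun y hy => by
    simpa using EuclideanSpace.norm_le_sqrt_card_mul_of_forall_abs_le (hGbound y hy)
  have hL : 0 ≤ √(k : ℝ) * C₂ :=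
    (norm_nonneg _).trans (hG 0 (Metric.mem_closedBall_self hr))
  calc _ ≤ √(k : ℝ) * C₂ * ‖_‖ :=
        (convex_closedBall _ _).norm_image_sub_le_of_norm_hasGradientWithin_le hg hG hAx hAAhx
    _ ≤ √(k : ℝ) * C₂ * (δ * (1 + εb)) := mul_le_mul_of_nonneg_left hdiff hL
    _ = _ := by ring

/-- Let `A, Â` be `k × d` row-orthonormal matrices and
`g ∈ C¹(B_{ℝ^k}(1+εb))` with `|∂_i g| ≤ C₂`.  If `‖AᵀA - ÂᵀÂ‖_F ≤ δ`, then for every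
`x ∈ B_{ℝ^d}(1+εb)` one has `Âx, A(ÂᵀÂx) ∈ B_{ℝ^k}(1+εb)` and
`|g(Ax) - g(AÂᵀÂx)| ≤ C₂ √k (1+εb) δ`; in particular, with `f = g ∘ A` and
`f̂ = g ∘ (A ÂᵀÂ)`, `sup_{B_{ℝ^d}(1+εb)} |f - f̂| ≤ C₂ √k (1+εb) δ`. -/
theorem statement17
    (d k : ℕ) (hk : 0 < k) (hkd : k ≤ d) (εb C₂ δ : ℝ) (hεb : 0 ≤ εb) (hC₂ : 0 < C₂)
    (A Ah : Matrix (Fin k) (Fin d) ℝ) (hA : A * Aᵀ = 1) (hAh : Ah * Ahᵀ = 1)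
    (g : EuclideanSpace ℝ (Fin k) → ℝ) (G : EuclideanSpace ℝ (Fin k) → EuclideanSpace ℝ (Fin k))
    (hg : ∀ y ∈ Metric.closedBall (0 : EuclideanSpace ℝ (Fin k)) (1 + εb),
      HasGradientWithinAt g (G y) (Metric.closedBall 0 (1 + εb)) y)
    (hGbound : ∀ y ∈ Metric.closedBall (0 : EuclideanSpace ℝ (Fin k)) (1 + εb),
      ∀ i, |G y i| ≤ C₂)
    (hδ : frobNorm (Aᵀ * A - Ahᵀ * Ah) ≤ δ) :
    ∀ x : Fin d → ℝ, ∑ l, x l ^ 2 ≤ (1 + εb) ^ 2 →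
      ((WithLp.toLp 2 (Ah.mulVec x) : EuclideanSpace ℝ (Fin k)) ∈
          Metric.closedBall (0 : EuclideanSpace ℝ (Fin k)) (1 + εb) ∧
        (WithLp.toLp 2 (A.mulVec (Ahᵀ.mulVec (Ah.mulVec x))) : EuclideanSpace ℝ (Fin k)) ∈
          Metric.closedBall (0 : EuclideanSpace ℝ (Fin k)) (1 + εb)) ∧
      |g (WithLp.toLp 2 (A.mulVec x) : EuclideanSpace ℝ (Fin k)) -
          g (WithLp.toLp 2 (A.mulVec (Ahᵀ.mulVec (Ah.mulVec x))) : EuclideanSpace ℝ (Fin k))| ≤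
        C₂ * Real.sqrt k * (1 + εb) * δ :=
  statement17_general d k εb C₂ δ hεb A Ah hA hAh g G hg hGbound hδ
end
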